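/- arXiv:1311.7082 — 7 statements merged into one kernel-verified Lean document; each statement's English description precedes it below -/
import Mathlib

section
/- Let p ≥ 1 be an integer and S ⊆ ℕ. If f : S^(p) → ℕ^(p) is a nonconstant function that is constant on M^(p) for some subset M ⊆ S with |M| ≥ 2p − 1, then f fixes an intersection, i.e., there exist distinct p-sets x, y ⊆ S with |f(x) ∩ f(y)| = |x ∩ y|. -/
theorem stmt_1 (p : ℕ) (hp : 1 ≤ p) (S : Set ℕ)
    (f : Finset ℕ → Finset ℕ)
    (hrange : ∀ x : Finset ℕ, ↑x ⊆ S → x.card = p → (f x).card = p)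
    (M : Finset ℕ) (hMS : ↑M ⊆ S) (hMcard : 2 * p - 1 ≤ M.card)
    (hconst : ∀ x y : Finset ℕ, x ⊆ M → x.card = p → y ⊆ M → y.card = p → f x = f y)
    (hnonconst : ∃ x y : Finset ℕ, ↑x ⊆ S ∧ x.card = p ∧ ↑y ⊆ S ∧ y.card = p ∧ f x ≠ f y) :
    ∃ x y : Finset ℕ, ↑x ⊆ S ∧ x.card = p ∧ ↑y ⊆ S ∧ y.card = p ∧ x ≠ y ∧
      (f x ∩ f y).card = (x ∩ y).card := by
  by_contra hfix
  push_neg at hfix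
  obtain ⟨x0, y0, hx0S, hx0c, hy0S, hy0c, hxy⟩ := hnonconst
  have hpM : p ≤ M.card := by omega
  obtain ⟨z0, hz0M, hz0card⟩ := Finset.exists_subset_card_eq hpM
  set c := f z0 with hc
  have hz0S : ↑z0 ⊆ S := (Finset.coe_subset.mpr hz0M).trans hMS
  have hccard : c.card = p := hrange z0 hz0S hz0card
  have subM : ∀ z : Finset ℕ, z ⊆ M → z.card = p → f z = c :=
    fun z h hcz => hconst z z0 h hcz hz0M hz0card
  have main : ∀ d, ∀ z : Finset ℕ, ↑z ⊆ S → z.card = p →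
      p - (z ∩ M).card ≤ d → f z = c := by
    intro d
    induction d with
    | zero =>
      intro z hzS hzc hd
      have hsub : z ∩ M = z :=
        Finset.eq_of_subset_of_card_le Finset.inter_subset_left (by omega)
      exact subM z (hsub ▸ Finset.inter_subset_right) hzc
    | succ d ih =>
      intro z hzS hzc hd
      set m := (z ∩ M).card with hm
      rcases le_or_gt p m with hpm | hpm
      · have hsub : z ∩ M = z :=
          Finset.eq_of_subset_of_card_le Finset.inter_subset_left (by omega)
        exact subM z (hsub ▸ Finset.inter_subset_right) hzc
      · by_contra hzne
        set t := (f z ∩ c).card with ht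
        have hfzc : (f z).card = p := hrange z hzS hzc
        -- t ≤ p - 1
        have htlt : t < p := by
          rcases lt_or_ge t p with h | h
          · exact h
          · exfalso
            have h1 : f z ∩ c = f z :=
              Finset.eq_of_subset_of_card_le Finset.inter_subset_left (by omega)
            have h2 : f z ∩ c = c :=
              Finset.eq_of_subset_of_card_le Finset.inter_subset_right (by omega)
            exact hzne (h1 ▸ h2)
        -- card of M \ z and z \ M
        have hMz : (M \ z).card = M.card - m := by
          rw [← Finset.sdiff_inter_self_right M z]
          rw [Finset.card_sdiff_of_subset Finset.inter_subset_right]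
        have hzM : (z \ M).card = p - m := by
          rw [← Finset.sdiff_inter_self_left z M]
          rw [Finset.card_sdiff_of_subset Finset.inter_subset_left, hzc]
        -- case t ≤ m : build x ⊆ M with x ∩ z = t elements
        rcases le_or_gt t m with htm | htm
        · obtain ⟨A, hA, hAcard⟩ := Finset.exists_subset_card_eq
            (show t ≤ (z ∩ M).card from htm)
          obtain ⟨B, hB, hBcard⟩ := Finset.exists_subset_card_eq
            (show p - t ≤ (M \ z).card by omega)
          have hABdisj : Disjoint A B := by
            refine Finset.disjoint_left.mpr fun a haA haB => ?_
            exact (Finset.mem_sdiff.mp (hB haB)).2 (Finset.inter_subset_left (hA haA))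
          set x := A ∪ B with hx
          have hxM : x ⊆ M :=
            Finset.union_subset (hA.trans Finset.inter_subset_right)
              (hB.trans Finset.sdiff_subset)
          have hxcard : x.card = p := by
            rw [hx, Finset.card_union_of_disjoint hABdisj, hAcard, hBcard]; omega
          have hfx : f x = c := subM x hxM hxcard
          have hxz : x ∩ z = A := by
            ext a
            simp only [hx, Finset.mem_inter, Finset.mem_union]
            constructor
            · rintro ⟨hA' | hB', hz'⟩
              · exact hA'
              · exact absurd hz' (Finset.mem_sdiff.mp (hB hB')).2
            · intro haA
              exact ⟨Or.inl haA, Finset.inter_subset_left (hA haA)⟩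
          have hxS : ↑x ⊆ S := (Finset.coe_subset.mpr hxM).trans hMS
          have hne : z ≠ x := fun h => hzne (h ▸ hfx)
          have := hfix z x hzS hzc hxS hxcard hne
          rw [hfx] at this
          apply this
          rw [Finset.inter_comm z x, hxz, hAcard]
        -- case t ≥ m + 1 : swap j = p - t elements
        · set j := p - t with hj
          have hj1 : 1 ≤ j := by omega
          obtain ⟨D, hD, hDcard⟩ := Finset.exists_subset_card_eq
            (show j ≤ (z \ M).card by omega)
          obtain ⟨B, hB, hBcard⟩ := Finset.exists_subset_card_eq
            (show j ≤ (M \ z).card by omega)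
          set z' := (z \ D) ∪ B with hz'
          have hBz : Disjoint (z \ D) B := by
            refine Finset.disjoint_left.mpr fun a ha haB => ?_
            exact (Finset.mem_sdiff.mp (hB haB)).2 (Finset.sdiff_subset ha)
          have hz'card : z'.card = p := by
            rw [hz', Finset.card_union_of_disjoint hBz,
              Finset.card_sdiff_of_subset (hD.trans Finset.sdiff_subset), hzc, hDcard, hBcard]
            omega
          have hz'S : ↑z' ⊆ S := by
            rw [hz', Finset.coe_union]
            refine Set.union_subset ?_ ?_
            · exact (Finset.coe_subset.mpr Finset.sdiff_subset).trans hzS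
            · exact (Finset.coe_subset.mpr (hB.trans Finset.sdiff_subset)).trans hMS
          -- z' ∩ M is large
          have hz'M : m + j ≤ (z' ∩ M).card := by
            have hsub : (z ∩ M) ∪ B ⊆ z' ∩ M := by
              refine Finset.union_subset ?_ ?_
              · intro a ha
                rw [Finset.mem_inter] at ha ⊢
                refine ⟨?_, ha.2⟩
                rw [hz', Finset.mem_union, Finset.mem_sdiff]
                exact Or.inl ⟨ha.1, fun hD' => (Finset.mem_sdiff.mp (hD hD')).2 ha.2⟩
              · intro a ha
                rw [Finset.mem_inter]
                refine ⟨?_, (Finset.mem_sdiff.mp (hB ha)).1⟩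
                rw [hz', Finset.mem_union]
                exact Or.inr ha
            have hdisj : Disjoint (z ∩ M) B := by
              refine Finset.disjoint_left.mpr fun a ha haB => ?_
              exact (Finset.mem_sdiff.mp (hB haB)).2 (Finset.inter_subset_left ha)
            calc m + j = ((z ∩ M) ∪ B).card := by
                  rw [Finset.card_union_of_disjoint hdisj, hBcard]
              _ ≤ (z' ∩ M).card := Finset.card_le_card hsub
          have hfz' : f z' = c := by
            apply ih z' hz'S hz'card
            omega
          have hne : z ≠ z' := by
            intro h
            obtain ⟨a, haD⟩ := Finset.card_pos.mp (by omega : 0 < D.card)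
            have haz : a ∈ z := Finset.sdiff_subset (hD haD)
            have haM : a ∉ M := (Finset.mem_sdiff.mp (hD haD)).2
            rw [h, hz', Finset.mem_union, Finset.mem_sdiff] at haz
            rcases haz with ⟨_, hnD⟩ | hBa
            · exact hnD haD
            · exact haM (Finset.sdiff_subset (hB hBa))
          have hzz' : z ∩ z' = z \ D := by
            ext a
            simp only [hz', Finset.mem_inter, Finset.mem_union, Finset.mem_sdiff]
            constructor
            · rintro ⟨haz, ⟨_, hnD⟩ | hBa⟩
              · exact ⟨haz, hnD⟩
              · exact absurd haz (Finset.mem_sdiff.mp (hB hBa)).2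
            · rintro ⟨haz, hnD⟩
              exact ⟨haz, Or.inl ⟨haz, hnD⟩⟩
          have := hfix z z' hzS hzc hz'S hz'card hne
          rw [hfz'] at this
          apply this
          rw [hzz', Finset.card_sdiff_of_subset (hD.trans Finset.sdiff_subset), hzc, hDcard]
          omega
  have h1 : f x0 = c := main p x0 hx0S hx0c (by omega)
  have h2 : f y0 = c := main p y0 hy0S hy0c (by omega)
  exact hxy (h1 ▸ h2 ▸ rfl)
end

section
/- For every positive integer p, every nonconstant function f : ℕ^(p) → ℕ^(p) fixes an intersection; that is, there exist distinct p-element subsets x, y of ℕ with |f(x) ∩ f(y)| = |x ∩ y|. -/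
/-!
Induction on `p`, for maps defined on the `p`-subsets of an arbitrary infinite set `S`. A map
fixing no intersection sends disjoint sets to intersecting ones, so the images of all
`(p + 1)`-sets meet one finite set `Y`. Fix `w ∈ S`: by Ramsey's theorem there is an infinite
`M ⊆ S \ {w}` on which `f (insert w C) ∩ Y` does not depend on the `p`-set `C ⊆ M`. Removing a
common point of these images leaves a map on the `p`-subsets of `M` that fixes no intersection,
hence is constant by induction; so `f (insert w C) = T` for all such `C`.

The value `T` then spreads: if `#(f B) = #T = p + 1` and for every `m < p + 1` some `D` with
`f D = T` meets `B` in exactly `m` points, then `f B = T`. Such sets `D` exist first for `B ⊆ M`,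
and then, by induction on the part of `B` outside `M`, for every `B ⊆ S`.
-/

open Finset

variable {α β κ : Type*}

def Set.subsetsCard (S : Set α) (n : ℕ) : Set (Finset α) := {x | ↑x ⊆ S ∧ #x = n}

lemma Set.subsetsCard_mono {S T : Set α} (h : S ⊆ T) (n : ℕ) :
    S.subsetsCard n ⊆ T.subsetsCard n :=
  fun _ hx => ⟨hx.1.trans h, hx.2⟩

lemma exists_seq_of_forall_infinite (P : α → Set α → Prop)
    (step : ∀ M : Set α, M.Infinite → ∃ a ∈ M, ∃ M' ⊆ M \ {a}, M'.Infinite ∧ P a M')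
    {S : Set α} (hS : S.Infinite) :
    ∃ (a : ℕ → α) (M : ℕ → Set α), (∀ k, a k ∈ S) ∧ (∀ k, a k ∉ M (k + 1)) ∧
      (∀ j k, j < k → a k ∈ M (j + 1)) ∧ ∀ k, P (a k) (M (k + 1)) := by
  choose a ha M' hM'M hM'inf hP using step
  let seq : ℕ → {M : Set α // M.Infinite} := fun k =>
    Nat.rec ⟨S, hS⟩ (fun _ M => ⟨M' M.1 M.2, hM'inf M.1 M.2⟩) k
  have hanti : Antitone fun k => (seq k).1 :=
    antitone_nat_of_succ_le fun k => (hM'M _ _).trans Set.sdiff_subset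
  exact ⟨fun k => a _ (seq k).2, fun k => (seq k).1, fun k => hanti (Nat.zero_le k) (ha _ _),
    fun k h => (hM'M _ _ h).2 rfl, fun j k hjk => hanti hjk (ha _ _), fun k => hP _ _⟩

def IsMonochromatic (χ : Finset α → κ) (n : ℕ) (M : Set α) : Prop :=
  ∃ c, ∀ C ∈ M.subsetsCard n, χ C = c

variable [DecidableEq α]

theorem exists_infinite_isMonochromatic [Finite κ] (n : ℕ) {S : Set α} (hS : S.Infinite)
    (χ : Finset α → κ) : ∃ M ⊆ S, M.Infinite ∧ IsMonochromatic χ n M := by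
  induction n generalizing S χ with
  | zero =>
    refine ⟨S, subset_rfl, hS, χ ∅, fun C hC => ?_⟩
    rw [card_eq_zero.1 hC.2]
  | succ n ih =>
    obtain ⟨a, M, haS, ha_notMem, ha_mem, hmono⟩ :=
      exists_seq_of_forall_infinite (fun a M => IsMonochromatic (fun C => χ (insert a C)) n M)
        (fun M hM => by
          obtain ⟨a, ha⟩ := hM.nonempty
          obtain ⟨M', hM', hM'inf, hmono⟩ := ih (hM.sdiff (Set.finite_singleton a)) _
          exact ⟨a, ha, M', hM', hM'inf, hmono⟩) hS
    have ha_inj : a.Injective := by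
      intro j k h
      by_contra hne
      rcases Nat.lt_or_gt_of_ne hne with hjk | hkj
      · exact ha_notMem j (h.symm ▸ ha_mem j k hjk)
      · exact ha_notMem k (h ▸ ha_mem k j hkj)
    choose c hc using hmono
    obtain ⟨c₀, hc₀⟩ := Finite.exists_infinite_fiber c
    refine ⟨a '' (c ⁻¹' {c₀}), Set.image_subset_iff.2 fun k _ => haS k,
      (Set.infinite_coe_iff.1 hc₀).image ha_inj.injOn, c₀, fun C hC => ?_⟩
    -- split off the point of `C` with the smallest index
    have hex : ∃ k, a k ∈ C := by
      obtain ⟨x, hx⟩ := card_pos.1 (by rw [hC.2]; exact n.succ_pos)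
      obtain ⟨k, -, rfl⟩ := hC.1 hx
      exact ⟨k, hx⟩
    set k := Nat.find hex
    have hk : a k ∈ C := Nat.find_spec hex
    have hk₀ : c k = c₀ := by
      obtain ⟨j, hj, hjk⟩ := hC.1 hk
      exact ha_inj hjk ▸ hj
    have hrest : C.erase (a k) ∈ (M (k + 1)).subsetsCard n := by
      refine ⟨fun x hx => ?_, by rw [card_erase_of_mem hk, hC.2]; rfl⟩
      obtain ⟨hxk, hxC⟩ := mem_erase.1 hx
      obtain ⟨j, -, rfl⟩ := hC.1 hxC
      have hkj : k ≤ j := Nat.find_min' hex hxC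
      exact ha_mem k j (hkj.lt_of_ne fun h => hxk (h ▸ rfl))
    rw [← insert_erase hk]
    exact (hc k _ hrest).trans hk₀

lemma Set.Infinite.exists_card_eq_inter_eq {M : Set α} (hM : M.Infinite) {B₀ B : Finset α}
    (hB₀ : B₀ ⊆ B) (k : ℕ) : ∃ D : Finset α, ↑D ⊆ ↑B₀ ∪ M ∧ #D = #B₀ + k ∧ B ∩ D = B₀ := by
  obtain ⟨E, hEM, hE⟩ := (hM.sdiff B.finite_toSet).exists_subset_card_eq k
  have hBE : Disjoint B E := Finset.disjoint_right.2 fun x hx => (hEM hx).2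
  refine ⟨B₀ ∪ E, ?_, ?_, ?_⟩
  · rw [coe_union]
    exact Set.union_subset_union_right _ fun x hx => (hEM hx).1
  · rw [card_union_of_disjoint (hBE.mono_left hB₀), hE]
  · rw [Finset.inter_union_distrib_left, Finset.inter_eq_right.2 hB₀,
      Finset.disjoint_iff_inter_eq_empty.1 hBE, Finset.union_empty]

variable [DecidableEq β]

lemma Finset.eq_of_forall_lt_card_inter_ne {s t : Finset β} {n : ℕ} (hs : #s = n) (ht : #t = n)
    (h : ∀ m < n, #(s ∩ t) ≠ m) : s = t := by
  have hst : #(s ∩ t) = n :=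
    le_antisymm (hs ▸ card_le_card inter_subset_left) (not_lt.1 fun hlt => h _ hlt rfl)
  have hsub : s ⊆ t := inter_eq_left.1 (eq_of_subset_of_card_le inter_subset_left (by omega))
  exact eq_of_subset_of_card_le hsub (by omega)

def FixesNoIntersectionOn (f : Finset α → Finset β) (A : Set (Finset α)) : Prop :=
  ∀ x ∈ A, ∀ y ∈ A, x ≠ y → #(f x ∩ f y) ≠ #(x ∩ y)

lemma insert_mem_subsetsCard {S M : Set α} {n : ℕ} {w : α} (hw : w ∈ S) (hMS : M ⊆ S \ {w})
    {C : Finset α} (hC : C ∈ M.subsetsCard n) : insert w C ∈ S.subsetsCard (n + 1) := by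
  have hwC : w ∉ C := fun h => (hMS (hC.1 h)).2 rfl
  refine ⟨?_, by rw [card_insert_of_notMem hwC, hC.2]⟩
  rw [coe_insert]
  exact Set.insert_subset hw (hC.1.trans (hMS.trans Set.sdiff_subset))

namespace FixesNoIntersectionOn

variable {f : Finset α → Finset β} {S M : Set α} {n : ℕ}

lemma eq_of_forall_exists_card_inter (hfix : FixesNoIntersectionOn f (S.subsetsCard n))
    {B : Finset α} (hB : B ∈ S.subsetsCard n) (hfB : #(f B) = n) {T : Finset β} (hT : #T = n)
    (hD : ∀ m < n, ∃ D ∈ S.subsetsCard n, f D = T ∧ #(B ∩ D) = m) : f B = T := by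
  refine eq_of_forall_lt_card_inter_ne hfB hT fun m hm => ?_
  obtain ⟨D, hDS, rfl, hBD⟩ := hD m hm
  have hne : B ≠ D := by
    rintro rfl
    rw [inter_self, hB.2] at hBD
    omega
  exact hBD ▸ hfix B hB D hDS hne

lemma exists_forall_inter_nonempty (hS : S.Infinite)
    (hfix : FixesNoIntersectionOn f (S.subsetsCard (n + 1))) :
    ∃ Y : Finset β, ∀ B ∈ S.subsetsCard (n + 1), (f B ∩ Y).Nonempty := by
  obtain ⟨W, hWS, hW⟩ := hS.exists_subset_card_eq (2 * (n + 1))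
  refine ⟨(W.powersetCard (n + 1)).biUnion f, fun B hB => ?_⟩
  obtain ⟨A, hAWB, hA⟩ := exists_subset_card_eq (s := W \ B) (n := n + 1)
    (by have := le_card_sdiff B W; have := hB.2; omega)
  have hAB : B ∩ A = ∅ :=
    disjoint_iff_inter_eq_empty.1 (disjoint_of_subset_right hAWB disjoint_sdiff)
  have hA' : A ∈ S.subsetsCard (n + 1) :=
    ⟨(coe_subset.2 (hAWB.trans sdiff_subset)).trans hWS, hA⟩
  have hne : B ≠ A := by
    rintro rfl
    rw [inter_self] at hAB
    simp [hAB] at hA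
  obtain ⟨z, hz⟩ := card_pos.1 (Nat.pos_of_ne_zero (by simpa [hAB] using hfix B hB A hA' hne))
  obtain ⟨hzB, hzA⟩ := mem_inter.1 hz
  exact ⟨z, mem_inter.2 ⟨hzB, mem_biUnion.2
    ⟨A, mem_powersetCard.2 ⟨hAWB.trans sdiff_subset, hA⟩, hzA⟩⟩⟩

lemma erase_comp_insert (hfix : FixesNoIntersectionOn f (S.subsetsCard (n + 1))) {w : α}
    (hw : w ∈ S) (hMS : M ⊆ S \ {w}) {y : β} (hy : ∀ C ∈ M.subsetsCard n, y ∈ f (insert w C)) :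
    FixesNoIntersectionOn (fun C => (f (insert w C)).erase y) (M.subsetsCard n) := by
  intro C hC C' hC' hne
  have hwC : ∀ {C}, C ∈ M.subsetsCard n → w ∉ C := fun hC h => (hMS (hC.1 h)).2 rfl
  have hne' : insert w C ≠ insert w C' := fun h => hne <| by
    rw [← erase_insert (hwC hC), h, erase_insert (hwC hC')]
  have hy' : y ∈ f (insert w C) ∩ f (insert w C') := mem_inter.2 ⟨hy C hC, hy C' hC'⟩
  have h := hfix _ (insert_mem_subsetsCard hw hMS hC) _ (insert_mem_subsetsCard hw hMS hC') hne'
  rw [← insert_inter_distrib, card_insert_of_notMem fun h => hwC hC (mem_inter.1 h).1] at h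
  have := card_pos.2 ⟨y, hy'⟩
  rw [erase_inter, inter_erase, erase_idem, card_erase_of_mem hy']
  omega

lemma exists_insert_eqOn
    (hconst : ∀ {M : Set α} {g : Finset α → Finset β}, M.Infinite →
      (∀ C ∈ M.subsetsCard n, #(g C) = n) → FixesNoIntersectionOn g (M.subsetsCard n) →
      ∃ T, ∀ C ∈ M.subsetsCard n, g C = T)
    (hS : S.Infinite) (hf : ∀ B ∈ S.subsetsCard (n + 1), #(f B) = n + 1)
    (hfix : FixesNoIntersectionOn f (S.subsetsCard (n + 1))) :
    ∃ w ∈ S, ∃ M ⊆ S \ {w}, M.Infinite ∧ ∃ T, ∀ C ∈ M.subsetsCard n, f (insert w C) = T := by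
  obtain ⟨Y, hY⟩ := hfix.exists_forall_inter_nonempty hS
  obtain ⟨w, hw⟩ := hS.nonempty
  obtain ⟨M, hMS, hM, c, hc⟩ :=
    exists_infinite_isMonochromatic n (hS.sdiff (Set.finite_singleton w))
      fun C => (⟨f (insert w C) ∩ Y, mem_powerset.2 inter_subset_right⟩ : Y.powerset)
  have hc' : ∀ C ∈ M.subsetsCard n, f (insert w C) ∩ Y = c :=
    fun C hC => congrArg Subtype.val (hc C hC)
  obtain ⟨C₁, hC₁⟩ := hM.exists_subset_card_eq n
  obtain ⟨y, hy⟩ : (c : Finset β).Nonempty :=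
    hc' C₁ hC₁ ▸ hY _ (insert_mem_subsetsCard hw hMS hC₁)
  have hyf : ∀ C ∈ M.subsetsCard n, y ∈ f (insert w C) :=
    fun C hC => (mem_inter.1 ((hc' C hC).symm ▸ hy)).1
  obtain ⟨T, hT⟩ := hconst (g := fun C => (f (insert w C)).erase y) hM
    (fun C hC => by
      rw [card_erase_of_mem (hyf C hC), hf _ (insert_mem_subsetsCard hw hMS hC)]; rfl)
    (hfix.erase_comp_insert hw hMS hyf)
  exact ⟨w, hw, M, hMS, hM, insert y T, fun C hC => by rw [← hT C hC, insert_erase (hyf C hC)]⟩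

lemma eqOn_of_eqOn_insert (hfix : FixesNoIntersectionOn f (S.subsetsCard (n + 1)))
    (hf : ∀ B ∈ S.subsetsCard (n + 1), #(f B) = n + 1) (hM : M.Infinite) {w : α} (hw : w ∈ S)
    (hMS : M ⊆ S \ {w}) {T : Finset β} (hT : ∀ C ∈ M.subsetsCard n, f (insert w C) = T) :
    ∀ B ∈ M.subsetsCard (n + 1), f B = T := by
  obtain ⟨C₁, hC₁⟩ := hM.exists_subset_card_eq n
  intro B hB
  have hBS := Set.subsetsCard_mono (hMS.trans Set.sdiff_subset) _ hB
  refine hfix.eq_of_forall_exists_card_inter hBS (hf B hBS)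
    (hT C₁ hC₁ ▸ hf _ (insert_mem_subsetsCard hw hMS hC₁)) fun m hm => ?_
  obtain ⟨B₀, hB₀B, hB₀⟩ := exists_subset_card_eq (s := B) (n := m) (by rw [hB.2]; omega)
  obtain ⟨C, hCM, hC, hBC⟩ := hM.exists_card_eq_inter_eq hB₀B (n - m)
  have hC' : C ∈ M.subsetsCard n :=
    ⟨hCM.trans (Set.union_subset ((coe_subset.2 hB₀B).trans hB.1) subset_rfl), by omega⟩
  refine ⟨insert w C, insert_mem_subsetsCard hw hMS hC', hT C hC', ?_⟩
  rw [inter_insert_of_notMem fun h => (hMS (hB.1 h)).2 rfl, hBC, hB₀]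

lemma eqOn_of_eqOn_infinite (hfix : FixesNoIntersectionOn f (S.subsetsCard n))
    (hf : ∀ B ∈ S.subsetsCard n, #(f B) = n) (hM : M.Infinite) (hMS : M ⊆ S) {T : Finset β}
    (hT : ∀ B ∈ M.subsetsCard n, f B = T) : ∀ B ∈ S.subsetsCard n, f B = T := by
  obtain ⟨B₁, hB₁⟩ := hM.exists_subset_card_eq n
  have hTn : #T = n := hT B₁ hB₁ ▸ hf B₁ (Set.subsetsCard_mono hMS _ hB₁)
  suffices h : ∀ O, ∀ B ∈ S.subsetsCard n, ↑(B \ O) ⊆ M → f B = T from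
    fun B hB => h B B hB (by simp)
  intro O
  induction O using Finset.strongInduction with
  | H O ih =>
    intro B hB hBO
    rcases O.eq_empty_or_nonempty with rfl | ⟨b, hb⟩
    · rw [sdiff_empty] at hBO
      exact hT B ⟨hBO, hB.2⟩
    refine hfix.eq_of_forall_exists_card_inter hB (hf B hB) hTn fun m hm => ?_
    -- `D` meets `B` in `m` points avoiding `b`, so fewer of its points can lie outside `M`
    obtain ⟨B₀, hB₀b, hB₀⟩ := exists_subset_card_eq (s := B.erase b) (n := m)
      (by have := pred_card_le_card_erase (s := B) (a := b); rw [hB.2] at this; omega)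
    have hB₀B : B₀ ⊆ B := hB₀b.trans (erase_subset b B)
    obtain ⟨D, hDM, hD, hBD⟩ := hM.exists_card_eq_inter_eq hB₀B (n - m)
    have hDS : D ∈ S.subsetsCard n :=
      ⟨hDM.trans (Set.union_subset ((coe_subset.2 hB₀B).trans hB.1) hMS), by omega⟩
    have hO : O ∩ B₀ ⊂ O := (ssubset_iff_of_subset inter_subset_left).2
      ⟨b, hb, fun h => (mem_erase.1 (hB₀b (mem_inter.1 h).2)).1 rfl⟩
    refine ⟨D, hDS, ih _ hO D hDS fun x hx => ?_, by rw [hBD, hB₀]⟩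
    obtain ⟨hxD, hxO⟩ := mem_sdiff.1 hx
    by_cases hxB₀ : x ∈ B₀
    · exact hBO (mem_sdiff.2 ⟨hB₀B hxB₀, fun h => hxO (mem_inter.2 ⟨h, hxB₀⟩)⟩)
    · exact (hDM hxD).resolve_left hxB₀

theorem exists_eqOn (n : ℕ) (hS : S.Infinite) (hf : ∀ B ∈ S.subsetsCard n, #(f B) = n)
    (hfix : FixesNoIntersectionOn f (S.subsetsCard n)) : ∃ T, ∀ B ∈ S.subsetsCard n, f B = T := by
  induction n generalizing S f with
  | zero => exact ⟨f ∅, fun B hB => by rw [card_eq_zero.1 hB.2]⟩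
  | succ n ih =>
    obtain ⟨w, hw, M, hMS, hM, T, hT⟩ := hfix.exists_insert_eqOn ih hS hf
    exact ⟨T, hfix.eqOn_of_eqOn_infinite hf hM (hMS.trans Set.sdiff_subset)
      (hfix.eqOn_of_eqOn_insert hf hM hw hMS hT)⟩

end FixesNoIntersectionOn

theorem stmt_2_general (p : ℕ)
    (f : Finset ℕ → Finset ℕ)
    (hrange : ∀ x : Finset ℕ, x.card = p → (f x).card = p)
    (hnonconst : ∃ x y : Finset ℕ, x.card = p ∧ y.card = p ∧ f x ≠ f y) :
    ∃ x y : Finset ℕ, x.card = p ∧ y.card = p ∧ x ≠ y ∧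
      (f x ∩ f y).card = (x ∩ y).card := by
  by_contra! h
  obtain ⟨x, y, hx, hy, hxy⟩ := hnonconst
  obtain ⟨T, hT⟩ := FixesNoIntersectionOn.exists_eqOn p Set.infinite_univ
    (fun B hB => hrange B hB.2) fun B hB B' hB' => h B B' hB.2 hB'.2
  exact hxy ((hT x ⟨Set.subset_univ _, hx⟩).trans (hT y ⟨Set.subset_univ _, hy⟩).symm)

theorem stmt_2 (p : ℕ) (hp : 1 ≤ p)
    (f : Finset ℕ → Finset ℕ)
    (hrange : ∀ x : Finset ℕ, x.card = p → (f x).card = p)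
    (hnonconst : ∃ x y : Finset ℕ, x.card = p ∧ y.card = p ∧ f x ≠ f y) :
    ∃ x y : Finset ℕ, x.card = p ∧ y.card = p ∧ x ≠ y ∧
      (f x ∩ f y).card = (x ∩ y).card :=
  stmt_2_general p f hrange hnonconst
end

section
/- For every integer p ≥ 1 there exists n₀ such that for all n ≥ n₀, the set [n]^(p) has the fixed intersection property: every nonconstant function f : [n]^(p) → [n]^(p) admits distinct p-sets x, y ⊆ [n] with |f(x) ∩ f(y)| = |x ∩ y|. -/
open Finset

/-- Finite hypergraph Ramsey theorem, multicolour, for colourings of `r`-subsets of a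
finite ground set of naturals, colours being finsets from a palette `K` of size `≤ c`. -/
lemma hyper_ramsey : ∀ (r c m : ℕ), ∃ R : ℕ, ∀ (G : Finset ℕ) (χ : Finset ℕ → Finset ℕ)
    (K : Finset (Finset ℕ)), K.card ≤ c → R ≤ G.card →
    (∀ T, T ⊆ G → T.card = r → χ T ∈ K) →
    ∃ G', G' ⊆ G ∧ m ≤ G'.card ∧
      ∀ T T', T ⊆ G' → T' ⊆ G' → T.card = r → T'.card = r → χ T = χ T' := by
  intro r
  induction r with
  | zero =>
    intro c m
    refine ⟨m, fun G χ K _ hG _ => ⟨G, Subset.rfl, hG, ?_⟩⟩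
    intro T T' _ _ hT hT'
    rw [Finset.card_eq_zero] at hT hT'
    rw [hT, hT']
  | succ r IH =>
    intro c m
    have chain : ∀ t : ℕ, ∃ S : ℕ, ∀ (G : Finset ℕ) (χ : Finset ℕ → Finset ℕ)
        (K : Finset (Finset ℕ)), K.card ≤ c → S ≤ G.card →
        (∀ T, T ⊆ G → T.card = r + 1 → χ T ∈ K) →
        ∃ (a : ℕ → ℕ) (d : ℕ → Finset ℕ) (B : ℕ → Finset ℕ),
          (∀ i, i < t → a i ∈ G) ∧
          (∀ i, i < t → B i ⊆ G) ∧
          (∀ i, i < t → a i ∉ B i) ∧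
          (∀ i j, i < j → j < t → a j ∈ B i) ∧
          (∀ i, i < t → d i ∈ K) ∧
          (∀ i, i < t → ∀ T, T ⊆ B i → T.card = r → χ (insert (a i) T) = d i) := by
      intro t
      induction t with
      | zero =>
        exact ⟨0, fun G χ K _ _ _ =>
          ⟨fun _ => 0, fun _ => ∅, fun _ => ∅,
            fun i hi => absurd hi (Nat.not_lt_zero i),
            fun i hi => absurd hi (Nat.not_lt_zero i),
            fun i hi => absurd hi (Nat.not_lt_zero i),
            fun i j _ hj => absurd hj (Nat.not_lt_zero j),
            fun i hi => absurd hi (Nat.not_lt_zero i),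
            fun i hi => absurd hi (Nat.not_lt_zero i)⟩⟩
      | succ t IHt =>
        obtain ⟨S, hS⟩ := IHt
        obtain ⟨R₀, hR₀⟩ := IH c (max S r)
        refine ⟨R₀ + 1, ?_⟩
        intro G χ K hK hG hχ
        have hGne : G.Nonempty := card_pos.mp (by omega)
        obtain ⟨a₀, ha₀⟩ := hGne
        have h1 : R₀ ≤ (G.erase a₀).card := by
          rw [card_erase_of_mem ha₀]; omega
        have hcolor : ∀ T, T ⊆ G.erase a₀ → T.card = r → χ (insert a₀ T) ∈ K := by
          intro T hT hTc
          have ha₀T : a₀ ∉ T := fun h => (notMem_erase a₀ G) (hT h)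
          refine hχ _ ?_ ?_
          · intro x hx
            rcases mem_insert.mp hx with h | h
            · exact h ▸ ha₀
            · exact (erase_subset a₀ G) (hT h)
          · rw [card_insert_of_notMem ha₀T, hTc]
        obtain ⟨B₀, hB₀sub, hB₀card, hB₀hom⟩ :=
          hR₀ (G.erase a₀) (fun T => χ (insert a₀ T)) K hK h1 hcolor
        -- pick T₀ ⊆ B₀ of card r to define d₀
        obtain ⟨T₀, hT₀sub, hT₀card⟩ := exists_subset_card_eq
          (show r ≤ B₀.card from le_trans (le_max_right S r) hB₀card)
        set d₀ := χ (insert a₀ T₀) with hd₀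
        have hd₀K : d₀ ∈ K := hcolor T₀ (hT₀sub.trans hB₀sub) hT₀card
        -- recurse
        obtain ⟨a, d, B, ha, hB, haB, hnest, hdK, hhom⟩ :=
          hS B₀ χ K hK (le_trans (le_max_left S r) hB₀card)
            (fun T hT hTc => hχ T (hT.trans (hB₀sub.trans (erase_subset a₀ G))) hTc)
        refine ⟨fun i => if i = 0 then a₀ else a (i - 1),
                fun i => if i = 0 then d₀ else d (i - 1),
                fun i => if i = 0 then B₀ else B (i - 1), ?_, ?_, ?_, ?_, ?_, ?_⟩
        · -- a i ∈ G
          intro i hi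
          by_cases h : i = 0
          · simp [h, ha₀]
          · simp only [h, if_false]
            exact (hB₀sub.trans (erase_subset a₀ G)) (ha (i - 1) (by omega))
        · -- B i ⊆ G
          intro i hi
          by_cases h : i = 0
          · simpa [h] using hB₀sub.trans (erase_subset a₀ G)
          · simp only [h, if_false]
            exact (hB (i - 1) (by omega)).trans (hB₀sub.trans (erase_subset a₀ G))
        · -- a i ∉ B i
          intro i hi
          by_cases h : i = 0
          · simp only [h, if_pos rfl]
            exact fun hmem => (notMem_erase a₀ G) (hB₀sub hmem)
          · simp only [h, if_false]
            exact haB (i - 1) (by omega)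
        · -- nesting : i < j → a j ∈ B i
          intro i j hij hj
          have hj0 : j ≠ 0 := by omega
          by_cases h : i = 0
          · simp only [h, if_pos rfl, hj0, if_false]
            exact ha (j - 1) (by omega)
          · simp only [h, hj0, if_false]
            exact hnest (i - 1) (j - 1) (by omega) (by omega)
        · -- d i ∈ K
          intro i hi
          by_cases h : i = 0
          · simp [h, hd₀K]
          · simp only [h, if_false]
            exact hdK (i - 1) (by omega)
        · -- homogeneity of each level
          intro i hi T hT hTc
          by_cases h : i = 0
          · simp only [h, if_pos rfl] at hT ⊢
            exact hB₀hom T T₀ hT hT₀sub hTc hT₀card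
          · simp only [h, if_false] at hT ⊢
            exact hhom (i - 1) (by omega) T hT hTc
    -- now use the chain with pigeonhole
    obtain ⟨S, hS⟩ := chain (c * m + 1)
    refine ⟨S, ?_⟩
    intro G χ K hK hG hχ
    obtain ⟨a, d, B, ha, hB, haB, hnest, hdK, hhom⟩ := hS G χ K hK hG hχ
    have hmaps : ∀ i ∈ Finset.range (c * m + 1), d i ∈ K := fun i hi =>
      hdK i (mem_range.mp hi)
    have hKne : K.Nonempty := ⟨d 0, hdK 0 (by omega)⟩
    have hcount : K.card * m ≤ (Finset.range (c * m + 1)).card := by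
      rw [card_range]
      calc K.card * m ≤ c * m := Nat.mul_le_mul_right m hK
      _ ≤ c * m + 1 := by omega
    obtain ⟨k, hkK, hfib⟩ :=
      Finset.exists_le_card_fiber_of_mul_le_card_of_maps_to hmaps hKne hcount
    set I := (Finset.range (c * m + 1)).filter (fun i => d i = k) with hI
    have hIlt : ∀ i ∈ I, i < c * m + 1 := by
      intro i hi
      exact mem_range.mp (mem_of_mem_filter i hi)
    have hInj : ∀ i ∈ I, ∀ j ∈ I, a i = a j → i = j := by
      intro i hi j hj hij
      by_contra hne
      rcases lt_or_gt_of_ne hne with h | h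
      · exact haB i (hIlt i hi) (hij ▸ hnest i j h (hIlt j hj))
      · exact haB j (hIlt j hj) (hij ▸ hnest j i h (hIlt i hi))
    refine ⟨I.image a, ?_, ?_, ?_⟩
    · intro x hx
      obtain ⟨i, hi, rfl⟩ := mem_image.mp hx
      exact ha i (hIlt i hi)
    · rw [card_image_of_injOn hInj]
      exact le_trans hfib le_rfl
    · have key : ∀ T, T ⊆ I.image a → T.card = r + 1 → χ T = k := by
        intro T hT hTc
        have hTne : T.Nonempty := card_pos.mp (by omega)
        set J := I.filter (fun i => a i ∈ T) with hJ
        have hJne : J.Nonempty := by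
          obtain ⟨x, hx⟩ := hTne
          obtain ⟨i, hi, rfl⟩ := mem_image.mp (hT hx)
          exact ⟨i, mem_filter.mpr ⟨hi, hx⟩⟩
        set i₀ := J.min' hJne with hi₀def
        have hi₀J : i₀ ∈ J := min'_mem J hJne
        have hi₀I : i₀ ∈ I := mem_of_mem_filter i₀ hi₀J
        have hi₀T : a i₀ ∈ T := (mem_filter.mp hi₀J).2
        have herase : T.erase (a i₀) ⊆ B i₀ := by
          intro x hx
          have hxT : x ∈ T := mem_of_mem_erase hx
          have hxne : x ≠ a i₀ := ne_of_mem_erase hx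
          obtain ⟨j, hj, rfl⟩ := mem_image.mp (hT hxT)
          have hjJ : j ∈ J := mem_filter.mpr ⟨hj, hxT⟩
          have : i₀ ≤ j := min'_le J j hjJ
          have hjne : j ≠ i₀ := fun h => hxne (by rw [h])
          exact hnest i₀ j (by omega) (hIlt j hj)
        have hcard : (T.erase (a i₀)).card = r := by
          rw [card_erase_of_mem hi₀T, hTc]; omega
        have : χ (insert (a i₀) (T.erase (a i₀))) = d i₀ :=
          hhom i₀ (hIlt i₀ hi₀I) _ herase hcard
        rw [insert_erase hi₀T] at this
        rw [this]
        exact (mem_filter.mp hi₀I).2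
      intro T T' hT hT' hTc hT'c
      rw [key T hT hTc, key T' hT' hT'c]


/-- Main auxiliary lemma: any "no-fixed-intersection" map on the `p`-subsets of a
large enough ground set is constant. -/
lemma nofix_const (p : ℕ) : ∃ N : ℕ, ∀ (G : Finset ℕ) (f : Finset ℕ → Finset ℕ),
    N ≤ G.card →
    (∀ x, x ⊆ G → x.card = p → (f x).card = p) →
    (∀ x y, x ⊆ G → y ⊆ G → x.card = p → y.card = p → x ≠ y →
      (f x ∩ f y).card ≠ (x ∩ y).card) →
    ∀ x y, x ⊆ G → y ⊆ G → x.card = p → y.card = p → f x = f y := by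
  induction p with
  | zero =>
    refine ⟨0, ?_⟩
    intro G f _ _ _ x y _ _ hx hy
    rw [card_eq_zero] at hx hy
    rw [hx, hy]
  | succ p IH =>
    obtain ⟨N', hN'⟩ := IH
    obtain ⟨R, hR⟩ := hyper_ramsey p (2 ^ (p + 1)) (max N' (2 * p + 3))
    refine ⟨R + p + 2, ?_⟩
    intro G f hG hcard hnofix
    set M := max N' (2 * p + 3) with hMdef
    have hM1 : 2 * p + 3 ≤ M := le_max_right _ _
    have hGne : G.Nonempty := card_pos.mp (by omega)
    obtain ⟨q, hq⟩ := hGne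
    have hz : p + 1 ≤ (G.erase q).card := by rw [card_erase_of_mem hq]; omega
    obtain ⟨z₀, hz₀sub, hz₀card⟩ := exists_subset_card_eq hz
    set W₀ := (G.erase q) \ z₀ with hW₀def
    have hW₀card : R ≤ W₀.card := by
      rw [card_sdiff_of_subset hz₀sub, card_erase_of_mem hq, hz₀card]; omega
    have hz₀G : z₀ ⊆ G := hz₀sub.trans (erase_subset q G)
    set C₀ := f z₀ with hC₀def
    have hC₀card : C₀.card = p + 1 := hcard z₀ hz₀G hz₀card
    have hqW₀ : q ∉ W₀ := fun h => (notMem_erase q G) (mem_sdiff.mp h).1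
    have hW₀G : W₀ ⊆ G := (sdiff_subset).trans (erase_subset q G)
    have hqz₀ : q ∉ z₀ := fun h => (notMem_erase q G) (hz₀sub h)
    set χ : Finset ℕ → Finset ℕ := fun T => f (insert q T) ∩ C₀ with hχdef
    set K := C₀.powerset.erase ∅ with hKdef
    have hKcard : K.card ≤ 2 ^ (p + 1) := by
      calc K.card ≤ C₀.powerset.card := card_erase_le
        _ = 2 ^ (p + 1) := by rw [card_powerset, hC₀card]
    -- basic facts about star sets over W₀
    have hins : ∀ T : Finset ℕ, T ⊆ W₀ → T.card = p →
        insert q T ⊆ G ∧ (insert q T).card = p + 1 := by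
      intro T hT hTc
      have hqT : q ∉ T := fun h => hqW₀ (hT h)
      constructor
      · intro x hx
        rcases mem_insert.mp hx with h | h
        · exact h ▸ hq
        · exact hW₀G (hT h)
      · rw [card_insert_of_notMem hqT, hTc]
    -- colour validity
    have hχvalid : ∀ T, T ⊆ W₀ → T.card = p → χ T ∈ K := by
      intro T hT hTc
      obtain ⟨huG, huc⟩ := hins T hT hTc
      have hune : insert q T ≠ z₀ := by
        intro h
        exact hqz₀ (h ▸ mem_insert_self q T)
      have hinter : insert q T ∩ z₀ = ∅ := by
        rw [eq_empty_iff_forall_notMem]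
        intro x hx
        obtain ⟨hx1, hx2⟩ := mem_inter.mp hx
        rcases mem_insert.mp hx1 with h | h
        · exact hqz₀ (h ▸ hx2)
        · exact (mem_sdiff.mp (hT h)).2 hx2
      have := hnofix (insert q T) z₀ huG hz₀G huc hz₀card hune
      rw [hinter, card_empty] at this
      have hne : (f (insert q T) ∩ C₀) ≠ ∅ := by
        intro h
        apply this
        rw [h, card_empty]
      exact mem_erase.mpr ⟨hne, mem_powerset.mpr inter_subset_right⟩
    obtain ⟨G', hG'sub, hG'card, hG'hom⟩ := hR W₀ χ K hKcard hW₀card hχvalid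
    have hG'G : G' ⊆ G := hG'sub.trans hW₀G
    obtain ⟨T₀, hT₀sub, hT₀card⟩ := exists_subset_card_eq
      (show p ≤ G'.card by omega)
    have hσK : χ T₀ ∈ K := hχvalid T₀ (hT₀sub.trans hG'sub) hT₀card
    have hσne : (χ T₀).Nonempty := by
      rw [nonempty_iff_ne_empty]
      exact (mem_erase.mp hσK).1
    obtain ⟨y₀, hy₀σ⟩ := hσne
    -- y₀ lies in the image of every star set
    have hy₀ : ∀ T, T ⊆ G' → T.card = p → y₀ ∈ f (insert q T) := by
      intro T hT hTc
      have : χ T = χ T₀ := hG'hom T T₀ hT hT₀sub hTc hT₀card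
      have hy : y₀ ∈ χ T := this ▸ hy₀σ
      exact (mem_inter.mp hy).1
    set h : Finset ℕ → Finset ℕ := fun T => (f (insert q T)).erase y₀ with hhdef
    have hqG' : q ∉ G' := fun hmem => hqW₀ (hG'sub hmem)
    have hstarG : ∀ T : Finset ℕ, T ⊆ G' → T.card = p →
        insert q T ⊆ G ∧ (insert q T).card = p + 1 :=
      fun T hT hTc => hins T (hT.trans hG'sub) hTc
    -- apply induction hypothesis to h on G'
    have hconst : ∀ T T', T ⊆ G' → T' ⊆ G' → T.card = p → T'.card = p → h T = h T' := by
      apply hN' G' h (by omega)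
      · intro T hT hTc
        obtain ⟨huG, huc⟩ := hstarG T hT hTc
        rw [hhdef]
        simp only
        rw [card_erase_of_mem (hy₀ T hT hTc), hcard _ huG huc]
        omega
      · intro T T' hT hT' hTc hT'c hne
        obtain ⟨huG, huc⟩ := hstarG T hT hTc
        obtain ⟨hu'G, hu'c⟩ := hstarG T' hT' hT'c
        have hqT : q ∉ T := fun hh => hqG' (hT hh)
        have hqT' : q ∉ T' := fun hh => hqG' (hT' hh)
        have hune : insert q T ≠ insert q T' := by
          intro hh
          apply hne
          rw [← erase_insert hqT, ← erase_insert hqT', hh]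
        have hmain := hnofix _ _ huG hu'G huc hu'c hune
        have e1 : h T ∩ h T' = (f (insert q T) ∩ f (insert q T')).erase y₀ := by
          rw [hhdef]; simp only
          ext x
          simp only [mem_erase, mem_inter]
          tauto
        have e2 : insert q T ∩ insert q T' = insert q (T ∩ T') := by
          ext x
          simp only [mem_inter, mem_insert]
          tauto
        have hy₀mem : y₀ ∈ f (insert q T) ∩ f (insert q T') :=
          mem_inter.mpr ⟨hy₀ T hT hTc, hy₀ T' hT' hT'c⟩
        have c1 : (h T ∩ h T').card = (f (insert q T) ∩ f (insert q T')).card - 1 := by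
          rw [e1, card_erase_of_mem hy₀mem]
        have c2 : (insert q T ∩ insert q T').card = (T ∩ T').card + 1 := by
          rw [e2, card_insert_of_notMem (fun hh => hqT (mem_inter.mp hh).1)]
        have c3 : 1 ≤ (f (insert q T) ∩ f (insert q T')).card :=
          card_pos.mpr ⟨y₀, hy₀mem⟩
        omega
    set C := f (insert q T₀) with hCdef
    have hCcard : C.card = p + 1 := by
      obtain ⟨huG, huc⟩ := hstarG T₀ hT₀sub hT₀card
      exact hcard _ huG huc
    -- all star sets have image C
    have hstar : ∀ T, T ⊆ G' → T.card = p → f (insert q T) = C := by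
      intro T hT hTc
      have h1 : h T = h T₀ := hconst T T₀ hT hT₀sub hTc hT₀card
      have h2 : insert y₀ (h T) = f (insert q T) := by
        rw [hhdef]; simp only
        exact insert_erase (hy₀ T hT hTc)
      have h3 : insert y₀ (h T₀) = f (insert q T₀) := by
        rw [hhdef]; simp only
        exact insert_erase (hy₀ T₀ hT₀sub hT₀card)
      rw [← h2, h1, h3, hCdef]
    -- intersection bound with C
    have hrle : ∀ D : Finset ℕ, D.card = p + 1 → D ≠ C → (D ∩ C).card ≤ p := by
      intro D hDc hDne
      by_contra hcon
      push_neg at hcon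
      have hsub1 : D ∩ C ⊆ C := inter_subset_right
      have hsub2 : D ∩ C ⊆ D := inter_subset_left
      have hle : C.card ≤ (D ∩ C).card := by omega
      have e1 : D ∩ C = C := eq_of_subset_of_card_le hsub1 hle
      have hle2 : D.card ≤ (D ∩ C).card := by omega
      have e2 : D ∩ C = D := eq_of_subset_of_card_le hsub2 hle2
      exact hDne (e2 ▸ e1)
    set H := insert q G' with hHdef
    have hHG : H ⊆ G := by
      intro x hx
      rcases mem_insert.mp hx with hh | hh
      · exact hh ▸ hq
      · exact hG'G hh
    have hHcard : H.card = M + 1 + (G'.card - M) := by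
      rw [hHdef, card_insert_of_notMem hqG']; omega
    -- window: all (p+1)-subsets of H have image C
    have hwin : ∀ w, w ⊆ H → w.card = p + 1 → f w = C := by
      intro w hw hwc
      by_cases hqw : q ∈ w
      · have hsub : w.erase q ⊆ G' := by
          intro x hx
          have hx1 := mem_of_mem_erase hx
          have hx2 := ne_of_mem_erase hx
          rcases mem_insert.mp (hw hx1) with hh | hh
          · exact absurd hh hx2
          · exact hh
        have hcard' : (w.erase q).card = p := by
          rw [card_erase_of_mem hqw, hwc]
          omega
        have := hstar (w.erase q) hsub hcard'
        rwa [insert_erase hqw] at this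
      · have hwG' : w ⊆ G' := by
          intro x hx
          rcases mem_insert.mp (hw hx) with hh | hh
          · exact absurd (hh ▸ hx) hqw
          · exact hh
        by_contra hD
        set r := (f w ∩ C).card with hrdef
        have hfwc : (f w).card = p + 1 := hcard w (hwG'.trans hG'G) hwc
        have hr : r ≤ p := hrle (f w) hfwc hD
        have hrw : r ≤ p + 1 := by omega
        obtain ⟨w', hw'sub, hw'card⟩ := exists_subset_card_eq (show r ≤ w.card by omega)
        have hsd : p ≤ (G' \ w).card := by
          have : (G' \ w).card = G'.card - w.card := card_sdiff_of_subset hwG'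
          omega
        obtain ⟨F, hFsub, hFcard⟩ := exists_subset_card_eq
          (show p - r ≤ (G' \ w).card by omega)
        have hdisj : Disjoint w' F := by
          rw [disjoint_left]
          intro x hx hx2
          exact (mem_sdiff.mp (hFsub hx2)).2 (hw'sub hx)
        set T := w' ∪ F with hTdef
        have hTsub : T ⊆ G' := by
          intro x hx
          rcases mem_union.mp hx with hh | hh
          · exact hwG' (hw'sub hh)
          · exact (mem_sdiff.mp (hFsub hh)).1
        have hTcard : T.card = p := by
          rw [hTdef, card_union_of_disjoint hdisj, hw'card, hFcard]; omega
        have hfu : f (insert q T) = C := hstar T hTsub hTcard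
        have hint : insert q T ∩ w = w' := by
          ext x
          simp only [mem_inter, mem_insert, hTdef, mem_union]
          constructor
          · rintro ⟨hh | hh | hh, hxw⟩
            · exact absurd (hh ▸ hxw) hqw
            · exact hh
            · exact absurd hxw (mem_sdiff.mp (hFsub hh)).2
          · intro hh
            exact ⟨Or.inr (Or.inl hh), hw'sub hh⟩
        have hune : insert q T ≠ w := by
          intro hh
          exact hqw (hh ▸ mem_insert_self q T)
        obtain ⟨huG, huc⟩ := hstarG T hTsub hTcard
        have := hnofix (insert q T) w huG (hwG'.trans hG'G) huc hwc hune
        apply this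
        rw [hfu, hint, hw'card, inter_comm, hrdef]
    -- spreading to all of G
    have hkey : ∀ j, ∀ v, v ⊆ G → v.card = p + 1 → (v \ H).card ≤ j → f v = C := by
      intro j
      induction j with
      | zero =>
        intro v hv hvc hvH
        have : v \ H = ∅ := card_eq_zero.mp (by omega)
        exact hwin v (sdiff_eq_empty_iff_subset.mp this) hvc
      | succ j IHj =>
        intro v hv hvc hvH
        by_contra hD
        set r := (f v ∩ C).card with hrdef
        have hfvc : (f v).card = p + 1 := hcard v hv hvc
        have hr : r ≤ p := hrle (f v) hfvc hD
        set a := (v ∩ H).card with hadef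
        have hvsplit : (v \ H).card + (v ∩ H).card = v.card := card_sdiff_add_card_inter v H
        obtain ⟨w₁, hw₁sub, hw₁card⟩ := exists_subset_card_eq
          (show min r a ≤ (v ∩ H).card from min_le_right r a)
        obtain ⟨w₂, hw₂sub, hw₂card⟩ := exists_subset_card_eq
          (show r - min r a ≤ (v \ H).card by omega)
        have hd12 : Disjoint w₁ w₂ := by
          rw [disjoint_left]
          intro x hx hx2
          exact (mem_sdiff.mp (hw₂sub hx2)).2 (mem_inter.mp (hw₁sub hx)).2
        set w' := w₁ ∪ w₂ with hw'def
        have hw'v : w' ⊆ v := by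
          intro x hx
          rcases mem_union.mp hx with hh | hh
          · exact (mem_inter.mp (hw₁sub hh)).1
          · exact (mem_sdiff.mp (hw₂sub hh)).1
        have hw'card : w'.card = r := by
          rw [hw'def, card_union_of_disjoint hd12, hw₁card, hw₂card]; omega
        have hHv : p + 1 - r ≤ (H \ v).card := by
          have h1 : (H \ v).card + (H ∩ v).card = H.card := card_sdiff_add_card_inter H v
          have h2 : (H ∩ v).card ≤ v.card := card_le_card inter_subset_right
          omega
        obtain ⟨F, hFsub, hFcard⟩ := exists_subset_card_eq hHv
        have hdisj : Disjoint w' F := by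
          rw [disjoint_left]
          intro x hx hx2
          exact (mem_sdiff.mp (hFsub hx2)).2 (hw'v hx)
        set u := w' ∪ F with hudef
        have huG : u ⊆ G := by
          intro x hx
          rcases mem_union.mp hx with hh | hh
          · exact hv (hw'v hh)
          · exact hHG (mem_sdiff.mp (hFsub hh)).1
        have huc : u.card = p + 1 := by
          rw [hudef, card_union_of_disjoint hdisj, hw'card, hFcard]; omega
        have hint : u ∩ v = w' := by
          ext x
          simp only [hudef, mem_inter, mem_union]
          constructor
          · rintro ⟨hh | hh, hxv⟩
            · exact hh
            · exact absurd hxv (mem_sdiff.mp (hFsub hh)).2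
          · intro hh
            exact ⟨Or.inl hh, hw'v hh⟩
        have hFne : F.Nonempty := card_pos.mp (by omega)
        have hune : u ≠ v := by
          obtain ⟨x, hxF⟩ := hFne
          intro hh
          exact (mem_sdiff.mp (hFsub hxF)).2 (hh ▸ (mem_union.mpr (Or.inr hxF)))
        have huH : u \ H ⊆ w₂ := by
          intro x hx
          obtain ⟨hx1, hx2⟩ := mem_sdiff.mp hx
          rcases mem_union.mp hx1 with hh | hh
          · rcases mem_union.mp hh with h1 | h1
            · exact absurd (mem_inter.mp (hw₁sub h1)).2 hx2
            · exact h1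
          · exact absurd (mem_sdiff.mp (hFsub hh)).1 hx2
        have huHcard : (u \ H).card ≤ j := by
          have h1 : (u \ H).card ≤ r - min r a := hw₂card ▸ card_le_card huH
          omega
        have hfu : f u = C := IHj u huG huc huHcard
        have := hnofix u v huG hv huc hvc hune
        apply this
        rw [hfu, hint, hw'card, inter_comm, hrdef]
    intro x y hx hy hxc hyc
    have h1 : f x = C := hkey (p + 1) x hx hxc
      (le_trans (card_le_card sdiff_subset) (le_of_eq hxc))
    have h2 : f y = C := hkey (p + 1) y hy hyc
      (le_trans (card_le_card sdiff_subset) (le_of_eq hyc))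
    rw [h1, h2]

/-- `[n]^(p)` has the fixed intersection property: every nonconstant
`f : [n]^(p) → [n]^(p)` fixes an intersection. -/
def FixedIntersectionProperty (n p : ℕ) : Prop :=
  ∀ f : Finset ℕ → Finset ℕ,
    (∀ x : Finset ℕ, x ⊆ Finset.Icc 1 n → x.card = p →
      f x ⊆ Finset.Icc 1 n ∧ (f x).card = p) →
    (∃ x y : Finset ℕ, x ⊆ Finset.Icc 1 n ∧ x.card = p ∧
      y ⊆ Finset.Icc 1 n ∧ y.card = p ∧ f x ≠ f y) →
    ∃ x y : Finset ℕ, x ⊆ Finset.Icc 1 n ∧ x.card = p ∧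
      y ⊆ Finset.Icc 1 n ∧ y.card = p ∧ x ≠ y ∧
      (f x ∩ f y).card = (x ∩ y).card

theorem stmt_4 (p : ℕ) (hp : 1 ≤ p) :
    ∃ n₀ : ℕ, ∀ n : ℕ, n₀ ≤ n → FixedIntersectionProperty n p := by
  obtain ⟨N, hN⟩ := nofix_const p
  refine ⟨N, ?_⟩
  intro n hn f hmaps hnc
  by_contra hcon
  push_neg at hcon
  obtain ⟨x₀, y₀, hx₀sub, hx₀card, hy₀sub, hy₀card, hne⟩ := hnc
  have hGcard : N ≤ (Finset.Icc 1 n).card := by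
    rw [Nat.card_Icc]; omega
  have hconst := hN (Finset.Icc 1 n) f hGcard
    (fun x hx hxc => (hmaps x hx hxc).2)
    (fun x y hx hy hxc hyc hxy => by
      intro heq
      exact (hcon x y hx hxc hy hyc hxy) heq)
  exact hne (hconst x₀ y₀ hx₀sub hy₀sub hx₀card hy₀card)
end

section
/- Let k ≥ 0, 1 ≤ p ≤ r be integers and G an r-uniform hypergraph. If G has an orientation such that for each p-set of vertices A there is some p-set I ⊆ [r] with d_I(A) ≤ k, then V^(p) can be partitioned into R = C(r,p) sets W₁,...,W_R such that for each j and each U ⊆ W_j, at most k·|U| edges e satisfy e^(p) ⊆ U. -/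
open Finset
open scoped Classical

theorem stmt_9 {V : Type} [Fintype V] [DecidableEq V]
    (r p k : ℕ) (hp : 1 ≤ p) (hpr : p ≤ r)
    (E : Finset (Finset V)) (hE : ∀ e ∈ E, e.card = r)
    (D : Finset V → (Fin r → V))
    (hD : ∀ e ∈ E, Finset.image (D e) Finset.univ = e)
    (hdeg : ∀ A : Finset V, A.card = p →
      ∃ I : Finset (Fin r), I.card = p ∧
        (E.filter (fun e => Finset.image (D e) I = A)).card ≤ k) :
    -- there is a partition of `V^(p)` into `R = C(r,p)` classes (given by `w`) such that
    -- for each class `j` and each family `U` of `p`-sets inside class `j`,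
    -- at most `k·|U|` edges have all their `p`-subsets in `U`
    ∃ w : Finset V → Fin (Nat.choose r p),
      ∀ j : Fin (Nat.choose r p), ∀ U : Finset (Finset V),
        (∀ A ∈ U, A.card = p ∧ w A = j) →
        (E.filter (fun e => ∀ A : Finset V, A ⊆ e → A.card = p → A ∈ U)).card ≤ k * U.card := by
  classical
  have hcard : Fintype.card {s : Finset (Fin r) // s.card = p} = Nat.choose r p := by
    simp [Fintype.card_finset_len]
  let enc : {s : Finset (Fin r) // s.card = p} ≃ Fin (Nat.choose r p) :=
    Fintype.equivFinOfCardEq hcard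
  have hpos : 0 < Nat.choose r p := Nat.choose_pos hpr
  refine ⟨fun A => if h : A.card = p then
      enc ⟨(hdeg A h).choose, (hdeg A h).choose_spec.1⟩ else ⟨0, hpos⟩, ?_⟩
  intro j U hU
  set I : Finset (Fin r) := (enc.symm j).1 with hIdef
  have hIcard : I.card = p := (enc.symm j).2
  apply Finset.card_le_mul_card_image_of_maps_to (f := fun e => Finset.image (D e) I)
  · intro e he
    rw [mem_filter] at he
    obtain ⟨heE, hall⟩ := he
    have hinj : Set.InjOn (D e) ((Finset.univ : Finset (Fin r)) : Set (Fin r)) := by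
      rw [← Finset.card_image_iff]
      rw [hD e heE, hE e heE]
      simp
    have hsub : Finset.image (D e) I ⊆ e := by
      calc Finset.image (D e) I ⊆ Finset.image (D e) Finset.univ :=
            Finset.image_subset_image (Finset.subset_univ I)
        _ = e := hD e heE
    have hc : (Finset.image (D e) I).card = p := by
      rw [Finset.card_image_of_injOn (hinj.mono (by simp))]
      exact hIcard
    exact hall _ hsub hc
  · intro A hA
    obtain ⟨hAp, hwA⟩ := hU A hA
    simp only [dif_pos hAp] at hwA
    have hIA : (hdeg A hAp).choose = I := by
      have h2 := congrArg enc.symm hwA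
      rw [Equiv.symm_apply_apply] at h2
      exact congrArg Subtype.val h2
    calc ((E.filter (fun e => ∀ A : Finset V, A ⊆ e → A.card = p → A ∈ U)).filter
            fun e => Finset.image (D e) I = A).card
        ≤ (E.filter fun e => Finset.image (D e) I = A).card := by
          apply Finset.card_le_card
          intro e he
          rw [mem_filter] at he ⊢
          exact ⟨(mem_filter.mp he.1).1, he.2⟩
      _ ≤ k := by rw [← hIA]; exact (hdeg A hAp).choose_spec.2
end

section
/- Let b, s, k be positive integers and H a graph that is not b-edge-Ramsey for K_s. Then there exists a graph G such that (i) every colouring of the vertices of G with k colours contains a monochromatic copy of H, and (ii) G is not b-edge-Ramsey for K_s. -/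
/-- The edge colouring `c` contains a monochromatic copy of `K_s` in `G`. -/
def HasMonoKs {V : Type} (G : SimpleGraph V) (s : ℕ) {X : Type} (c : Sym2 V → X) : Prop :=
  ∃ T : Finset V, T.card = s ∧ (∀ u ∈ T, ∀ v ∈ T, u ≠ v → G.Adj u v) ∧
    ∃ col : X, ∀ u ∈ T, ∀ v ∈ T, u ≠ v → c s(u, v) = col

/-!
Fix a colouring `c₀` of the edges of `H` without monochromatic `K_s`. We build `G` together with a
family of induced copies of `H` such that every `k`-colouring of `V(G)` has a monochromatic copy
in the family, every nonempty clique of `G` lies inside one copy, and an edge colouring of `G`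
agrees with `c₀` on every copy; a monochromatic `K_s` of `G` is then one of `H`.

Such systems are built by induction on `k` and on `|V(H)|`. Given a system `S₁` for `H - a` with
`k + 1` colours and a system `S₂` for `H` with `k` colours, take disjoint copies of `S₁` indexed
by `Fin (k + 1) × V(S₂)`; for every injective assignment `τ` of components to the vertices of
`S₂`, together with a copy of `H - a` in each chosen component, add a copy of `S₂` whose vertex `v`
is joined to the neighbours of `a` in the copy chosen for `v`. Under a `(k + 1)`-colouring each
component has a monochromatic copy of `H - a`, and by pigeonhole `|V(S₂)|` of them share a colour
`i`. Either a vertex of the copy of `S₂` attached to them has colour `i` and completes a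
monochromatic `H`, or that copy is coloured with the `k` other colours. Since `τ` is injective, a
clique meeting both an attached copy of `S₂` and a component lies in a single copy of `H`.
-/

open SimpleGraph Function

universe u

lemma SimpleGraph.IsClique.preimage_embedding {V W : Type*} {G : SimpleGraph V}
    {G' : SimpleGraph W} (φ : G ↪g G') {T : Set W} (hT : G'.IsClique T) :
    G.IsClique (φ ⁻¹' T) :=
  fun _ hx _ hy hxy => φ.map_adj_iff.1 (hT hx hy (φ.injective.ne hxy))

instance SimpleGraph.Embedding.finite {V W : Type*} {G : SimpleGraph V} {G' : SimpleGraph W}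
    [Finite V] [Finite W] : Finite (G ↪g G') :=
  DFunLike.finite _

theorem exists_embedding_prod_forall_eq {ι β : Type*} [Finite ι] [Nonempty ι] [Finite β]
    (g : ι × β → ι) : ∃ i, ∃ e : β ↪ ι × β, ∀ b, g (e b) = i := by
  classical
  have := Fintype.ofFinite ι
  have := Fintype.ofFinite β
  obtain ⟨i, hi⟩ := Fintype.exists_le_card_fiber_of_mul_le_card (f := g) (n := Fintype.card β)
    (by simp [Fintype.card_prod])
  obtain ⟨e⟩ : Nonempty (β ↪ {x // g x = i}) :=
    Function.Embedding.nonempty_of_card_le (by rwa [Fintype.card_subtype])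
  exact ⟨i, e.trans (Embedding.subtype _), fun b => (e b).2⟩

structure IsRamseySystem {α V X : Type*} (H : SimpleGraph α) (c₀ : Sym2 α → X) (k : ℕ)
    (G : SimpleGraph V) (C : Set (H ↪g G)) (col : Sym2 V → X) : Prop where
  exists_monochromatic : ∀ c : V → Fin k, ∃ φ ∈ C, ∃ i, ∀ u, c (φ u) = i
  coloring_eq : ∀ φ ∈ C, ∀ u v, H.Adj u v → col s(φ u, φ v) = c₀ s(u, v)
  subset_range_of_isClique : ∀ T : Set V, T.Nonempty → G.IsClique T → ∃ φ ∈ C, T ⊆ Set.range φ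

namespace IsRamseySystem

variable {α β V W X : Type*} {H : SimpleGraph α} {c₀ : Sym2 α → X} {k : ℕ}
  {G : SimpleGraph V} {C : Set (H ↪g G)} {col : Sym2 V → X}

theorem refl (H : SimpleGraph α) (c₀ : Sym2 α → X) (h : ∀ c : α → Fin k, ∃ i, ∀ u, c u = i) :
    IsRamseySystem H c₀ k H {SimpleGraph.Embedding.refl} c₀ where
  exists_monochromatic c := ⟨_, rfl, h c⟩
  coloring_eq := by rintro _ rfl u v -; rfl
  subset_range_of_isClique T _ _ := ⟨_, rfl, fun x _ => ⟨x, rfl⟩⟩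

theorem map {H' : SimpleGraph β} {c₀' : Sym2 β → X} {C : Set (H' ↪g G)} {G' : SimpleGraph W}
    (h : IsRamseySystem H' c₀' k G C col) (e : H ≃g H') (f : G ≃g G')
    (hc : ∀ u v, H.Adj u v → c₀' s(e u, e v) = c₀ s(u, v)) :
    IsRamseySystem H c₀ k G' ((fun φ => f.toEmbedding.comp (φ.comp e.toEmbedding)) '' C)
      (col ∘ Sym2.map f.symm) where
  exists_monochromatic c := by
    obtain ⟨φ, hφ, i, hi⟩ := h.exists_monochromatic (c ∘ f)
    exact ⟨_, ⟨φ, hφ, rfl⟩, i, fun u => hi (e u)⟩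
  coloring_eq := by
    rintro _ ⟨φ, hφ, rfl⟩ u v huv
    simpa [hc u v huv] using h.coloring_eq φ hφ _ _ (e.map_adj_iff.2 huv)
  subset_range_of_isClique T hT hTc := by
    obtain ⟨φ, hφ, hsub⟩ := h.subset_range_of_isClique (f ⁻¹' T) (hT.preimage f.surjective)
      (hTc.preimage_embedding f.toEmbedding)
    refine ⟨_, ⟨φ, hφ, rfl⟩, fun x hx => ?_⟩
    obtain ⟨v, hv⟩ := hsub (show f (f.symm x) ∈ T by simpa)
    exact ⟨e.symm v, by simp [hv]⟩

theorem exists_subset_range_comp {G' : SimpleGraph W} (h : IsRamseySystem H c₀ k G C col)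
    (e : G ↪g G') {T : Set W} (hT : T.Nonempty) (hTc : G'.IsClique T) (hsub : T ⊆ Set.range e) :
    ∃ φ ∈ C, T ⊆ Set.range (e.comp φ) := by
  obtain ⟨φ, hφ, hφT⟩ := h.subset_range_of_isClique (e ⁻¹' T) (hT.preimage' hsub)
    (hTc.preimage_embedding e)
  refine ⟨φ, hφ, fun x hx => ?_⟩
  obtain ⟨y, rfl⟩ := hsub hx
  obtain ⟨u, rfl⟩ := hφT hx
  exact ⟨u, rfl⟩

end IsRamseySystem

theorem IsRamseySystem.hasMonoKs_of_hasMonoKs {α V X : Type} {k : ℕ} {H : SimpleGraph α}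
    {c₀ : Sym2 α → X} {G : SimpleGraph V} {C : Set (H ↪g G)} {col : Sym2 V → X}
    (h : IsRamseySystem H c₀ k G C col) {s : ℕ} (hG : HasMonoKs G s col) : HasMonoKs H s c₀ := by
  classical
  obtain ⟨T, hTs, hTc, i, hi⟩ := hG
  obtain rfl | hT := T.eq_empty_or_nonempty
  · exact ⟨∅, hTs, by simp, i, by simp⟩
  obtain ⟨φ, hφ, hsub⟩ := h.subset_range_of_isClique T hT fun x hx y hy => hTc x hx y hy
  obtain ⟨K, -, rfl⟩ := Finset.subset_set_image_iff.1 (Set.image_univ ▸ hsub)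
  simp only [Finset.mem_image, forall_exists_index, and_imp, forall_apply_eq_imp_iff₂] at hTc hi
  have hK : ∀ u ∈ K, ∀ v ∈ K, u ≠ v → H.Adj u v := fun u hu v hv huv =>
    φ.map_adj_iff.1 (hTc u hu v hv (φ.injective.ne huv))
  refine ⟨K, by rwa [Finset.card_image_of_injective _ φ.injective] at hTs, hK, i,
    fun u hu v hv huv => ?_⟩
  rw [← h.coloring_eq φ hφ u v (hK u hu v hv huv)]
  exact hi u hu v hv (φ.injective.ne huv)

namespace Amalgam

/- `H` lives on `Option α` with `a = none`; the components of `S₁` are indexed by `ι × V₂`. -/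

variable {α ι V₁ V₂ X : Type*} {H : SimpleGraph (Option α)} {G₁ : SimpleGraph V₁}

abbrev Attachment (C₁ : Set (H.comap some ↪g G₁)) (ι V₂ : Type*) : Type _ :=
  (V₂ ↪ ι × V₂) × (V₂ → C₁)

abbrev Vertex (C₁ : Set (H.comap some ↪g G₁)) (ι V₂ : Type*) : Type _ :=
  (ι × V₂) × V₁ ⊕ Attachment C₁ ι V₂ × V₂

variable {C₁ : Set (H.comap some ↪g G₁)} {G₂ : SimpleGraph V₂}

def CrossAdj (τ : Attachment C₁ ι V₂) (v : V₂) (p : ι × V₂) (x : V₁) : Prop :=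
  p = τ.1 v ∧ ∃ q, H.Adj none (some q) ∧ (τ.2 v).1 q = x

def adj (G₂ : SimpleGraph V₂) (C₁ : Set (H.comap some ↪g G₁)) (ι : Type*) :
    Vertex C₁ ι V₂ → Vertex C₁ ι V₂ → Prop
  | .inl (p, x), .inl (p', x') => p = p' ∧ G₁.Adj x x'
  | .inr (τ, v), .inr (τ', v') => τ = τ' ∧ G₂.Adj v v'
  | .inl (p, x), .inr (τ, v) | .inr (τ, v), .inl (p, x) => CrossAdj τ v p x

def graph (G₂ : SimpleGraph V₂) (C₁ : Set (H.comap some ↪g G₁)) (ι : Type*) :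
    SimpleGraph (Vertex C₁ ι V₂) where
  Adj := adj G₂ C₁ ι
  symm := ⟨by
    rintro (⟨p, x⟩ | ⟨τ, v⟩) (⟨p', x'⟩ | ⟨τ', v'⟩) ⟨h₁, h₂⟩
    exacts [⟨h₁.symm, h₂.symm⟩, ⟨h₁, h₂⟩, ⟨h₁, h₂⟩, ⟨h₁.symm, h₂.symm⟩]⟩
  loopless := ⟨by
    rintro (⟨p, x⟩ | ⟨τ, v⟩) ⟨-, h⟩
    exacts [h.ne rfl, h.ne rfl]⟩

def component (G₂ : SimpleGraph V₂) (p : ι × V₂) : G₁ ↪g graph G₂ C₁ ι where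
  toFun x := .inl (p, x)
  inj' _ _ h := by simpa using h
  map_rel_iff' := ⟨And.right, And.intro rfl⟩

def attach (G₂ : SimpleGraph V₂) (τ : Attachment C₁ ι V₂) : G₂ ↪g graph G₂ C₁ ι where
  toFun v := .inr (τ, v)
  inj' _ _ h := by simpa using h
  map_rel_iff' := ⟨And.right, And.intro rfl⟩

lemma crossAdj_iff (τ : Attachment C₁ ι V₂) (v : V₂) (q : α) :
    CrossAdj τ v (τ.1 v) ((τ.2 v).1 q) ↔ H.Adj none (some q) := by
  refine ⟨fun ⟨_, q', hq', h⟩ => ?_, fun h => ⟨rfl, q, h, rfl⟩⟩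
  rwa [← (τ.2 v).1.injective h]

def connector (G₂ : SimpleGraph V₂) (τ : Attachment C₁ ι V₂) (v : V₂) : H ↪g graph G₂ C₁ ι where
  toFun
    | none => .inr (τ, v)
    | some q => .inl (τ.1 v, (τ.2 v).1 q)
  inj' := by
    rintro (_ | q) (_ | q') h
    · rfl
    · cases h
    · cases h
    · simpa using (τ.2 v).1.injective (by simpa using h)
  map_rel_iff' {a b} := by
    cases a <;> cases b
    · exact iff_of_false (fun h => h.2.ne rfl) H.irrefl
    · exact crossAdj_iff τ v _
    · exact (crossAdj_iff τ v _).trans (H.adj_comm _ _)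
    · exact (and_iff_right rfl).trans (τ.2 v).1.map_adj_iff

/- Off the range of `ψ` the value is never used. -/
noncomputable def crossColor (c₀ : Sym2 (Option α) → X) (ψ : H.comap some ↪g G₁) : V₁ → X :=
  extend ψ (fun q => c₀ s(none, some q)) fun _ => c₀ s(none, none)

noncomputable def pairColor (c₀ : Sym2 (Option α) → X) (col₁ : Sym2 V₁ → X) (col₂ : Sym2 V₂ → X) :
    Vertex C₁ ι V₂ → Vertex C₁ ι V₂ → X
  | .inl (_, x), .inl (_, x') => col₁ s(x, x')
  | .inr (_, v), .inr (_, v') => col₂ s(v, v')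
  | .inl (_, x), .inr (τ, v) | .inr (τ, v), .inl (_, x) => crossColor c₀ (τ.2 v).1 x

noncomputable def coloring (c₀ : Sym2 (Option α) → X) (col₁ : Sym2 V₁ → X) (col₂ : Sym2 V₂ → X) :
    Sym2 (Vertex C₁ ι V₂) → X :=
  Sym2.lift ⟨pairColor c₀ col₁ col₂, by
    rintro (⟨p, x⟩ | ⟨τ, v⟩) (⟨p', x'⟩ | ⟨τ', v'⟩) <;> simp [pairColor, Sym2.eq_swap]⟩

def copies (C₁ : Set (H.comap some ↪g G₁)) (ι : Type*) (C₂ : Set (H ↪g G₂)) :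
    Set (H ↪g graph G₂ C₁ ι) :=
  {ξ | (∃ τ, ∃ φ ∈ C₂, ξ = (attach G₂ τ).comp φ) ∨ ∃ τ v, ξ = connector G₂ τ v}

variable {k₁ k₂ : ℕ} {c₀ : Sym2 (Option α) → X} {col₁ : Sym2 V₁ → X} {col₂ : Sym2 V₂ → X}
  {C₂ : Set (H ↪g G₂)}

theorem coloring_eq (h₁ : IsRamseySystem (H.comap some) (c₀ ∘ Sym2.map some) k₁ G₁ C₁ col₁)
    (h₂ : IsRamseySystem H c₀ k₂ G₂ C₂ col₂) :
    ∀ ξ ∈ copies C₁ ι C₂, ∀ u w, H.Adj u w → coloring c₀ col₁ col₂ s(ξ u, ξ w) = c₀ s(u, w) := by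
  rintro _ (⟨τ, φ, hφ, rfl⟩ | ⟨τ, v, rfl⟩) u w huw
  · exact h₂.coloring_eq φ hφ u w huw
  have hcross (q : α) : crossColor c₀ (τ.2 v).1 ((τ.2 v).1 q) = c₀ s(none, some q) :=
    (τ.2 v).1.injective.extend_apply _ _ q
  cases u <;> cases w
  · exact absurd huw H.irrefl
  · exact hcross _
  · exact (hcross _).trans (congrArg c₀ Sym2.eq_swap)
  · exact h₁.coloring_eq _ (τ.2 v).2 _ _ huw

theorem exists_monochromatic {k : ℕ} [Finite V₂]
    (h₁ : ∀ c : V₁ → Fin (k + 1), ∃ ψ ∈ C₁, ∃ i, ∀ u, c (ψ u) = i)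
    (h₂ : ∀ c : V₂ → Fin k, ∃ φ ∈ C₂, ∃ i, ∀ u, c (φ u) = i)
    (c : Vertex C₁ (Fin (k + 1)) V₂ → Fin (k + 1)) :
    ∃ ξ ∈ copies C₁ (Fin (k + 1)) C₂, ∃ i, ∀ u, c (ξ u) = i := by
  choose ψ hψ color hcolor using fun p => h₁ (c ∘ component G₂ p)
  obtain ⟨i, ι, hι⟩ := exists_embedding_prod_forall_eq color
  let τ : Attachment C₁ (Fin (k + 1)) V₂ := (ι, fun v => ⟨ψ (ι v), hψ (ι v)⟩)
  by_cases hi : ∃ v, c (.inr (τ, v)) = i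
  · obtain ⟨v, hv⟩ := hi
    refine ⟨connector G₂ τ v, Or.inr ⟨τ, v, rfl⟩, i, ?_⟩
    rintro (_ | q)
    · exact hv
    · exact (hcolor (ι v) q).trans (hι v)
  · push Not at hi
    choose c' hc' using fun v => Fin.exists_succAbove_eq (hi v)
    obtain ⟨φ, hφ, j, hj⟩ := h₂ c'
    exact ⟨(attach G₂ τ).comp φ, Or.inl ⟨τ, φ, hφ, rfl⟩, i.succAbove j,
      fun u => by rw [← hj u]; exact (hc' _).symm⟩

variable {T : Set (Vertex C₁ ι V₂)}

theorem subset_range_connector (hT : (graph G₂ C₁ ι).IsClique T) {τ v p x}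
    (hv : .inr (τ, v) ∈ T) (hx : .inl (p, x) ∈ T) : T ⊆ Set.range (connector G₂ τ v) := by
  rintro (⟨p', x'⟩ | ⟨τ', v'⟩) hy
  · obtain ⟨rfl, q, -, rfl⟩ : CrossAdj τ v p' x' := hT hv hy (by simp)
    exact ⟨some q, rfl⟩
  · by_cases hyv : (τ', v') = (τ, v)
    · exact ⟨none, by rw [hyv]; rfl⟩
    · obtain ⟨rfl, hvv⟩ : τ = τ' ∧ G₂.Adj v v' := hT hv hy (by simpa [eq_comm] using hyv)
      have h₁ : p = τ.1 v := (hT hv hx (by simp)).1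
      have h₂ : p = τ.1 v' := (hT hy hx (by simp)).1
      exact absurd (τ.1.injective (h₁.symm.trans h₂)) hvv.ne

theorem subset_range_attach (hT : (graph G₂ C₁ ι).IsClique T) {τ v}
    (hv : .inr (τ, v) ∈ T) (hl : ∀ p x, .inl (p, x) ∉ T) : T ⊆ Set.range (attach G₂ τ) := by
  rintro (⟨p, x⟩ | ⟨τ', v'⟩) hy
  · exact absurd hy (hl p x)
  · obtain rfl : τ' = τ := by
      by_cases hyv : (τ', v') = (τ, v)
      · exact congrArg Prod.fst hyv
      · exact (hT hy hv (by simpa using hyv)).1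
    exact ⟨v', rfl⟩

theorem subset_range_component (hT : (graph G₂ C₁ ι).IsClique T) {p x}
    (hx : .inl (p, x) ∈ T) (hr : ∀ τ v, .inr (τ, v) ∉ T) : T ⊆ Set.range (component G₂ p) := by
  rintro (⟨p', x'⟩ | ⟨τ, v⟩) hy
  · obtain rfl : p' = p := by
      by_cases hyx : (p', x') = (p, x)
      · exact congrArg Prod.fst hyx
      · exact (hT hy hx (by simpa using hyx)).1
    exact ⟨x', rfl⟩
  · exact absurd hy (hr τ v)

theorem subset_range_of_isClique [Nonempty V₂]
    (h₁ : IsRamseySystem (H.comap some) (c₀ ∘ Sym2.map some) k₁ G₁ C₁ col₁)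
    (h₂ : IsRamseySystem H c₀ k₂ G₂ C₂ col₂) (hT : T.Nonempty)
    (hTc : (graph G₂ C₁ ι).IsClique T) : ∃ ξ ∈ copies C₁ ι C₂, T ⊆ Set.range ξ := by
  by_cases hr : ∃ τ v, .inr (τ, v) ∈ T
  · obtain ⟨τ, v, hv⟩ := hr
    by_cases hl : ∃ p x, .inl (p, x) ∈ T
    · obtain ⟨p, x, hx⟩ := hl
      exact ⟨_, Or.inr ⟨τ, v, rfl⟩, subset_range_connector hTc hv hx⟩
    · push Not at hl
      obtain ⟨φ, hφ, hsub⟩ :=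
        h₂.exists_subset_range_comp (attach G₂ τ) hT hTc (subset_range_attach hTc hv hl)
      exact ⟨_, Or.inl ⟨τ, φ, hφ, rfl⟩, hsub⟩
  · push Not at hr
    obtain ⟨⟨p, x⟩ | ⟨τ, v⟩, hx⟩ := hT
    swap
    · exact absurd hx (hr τ v)
    obtain ⟨ψ, hψ, hsub⟩ := h₁.exists_subset_range_comp (component G₂ p) ⟨_, hx⟩ hTc
      (subset_range_component hTc hx hr)
    classical
    obtain ⟨v₀⟩ := ‹Nonempty V₂›
    let ι₀ : V₂ ↪ ι × V₂ := (Equiv.swap v₀ p.2).toEmbedding.trans (Embedding.sectR p.1 V₂)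
    refine ⟨connector G₂ (ι₀, fun _ => ⟨ψ, hψ⟩) v₀, Or.inr ⟨_, _, rfl⟩, hsub.trans ?_⟩
    rintro _ ⟨q, rfl⟩
    exact ⟨some q, by simp [ι₀, connector]; rfl⟩

theorem isRamseySystem {k : ℕ} [Finite V₂] (hk : 1 ≤ k)
    (h₁ : IsRamseySystem (H.comap some) (c₀ ∘ Sym2.map some) (k + 1) G₁ C₁ col₁)
    (h₂ : IsRamseySystem H c₀ k G₂ C₂ col₂) :
    IsRamseySystem H c₀ (k + 1) (graph G₂ C₁ (Fin (k + 1))) (copies C₁ _ C₂)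
      (coloring c₀ col₁ col₂) where
  exists_monochromatic := exists_monochromatic h₁.exists_monochromatic h₂.exists_monochromatic
  coloring_eq := coloring_eq h₁ h₂
  subset_range_of_isClique _ hT hTc := by
    obtain ⟨φ, -⟩ := h₂.exists_monochromatic fun _ => ⟨0, hk⟩
    have : Nonempty V₂ := ⟨φ none⟩
    exact subset_range_of_isClique h₁ h₂ hT hTc

end Amalgam

theorem exists_isRamseySystem {X : Type*} {k : ℕ} (hk : 1 ≤ k) (α : Type u) [Finite α]
    (H : SimpleGraph α) (c₀ : Sym2 α → X) :
    ∃ (V : Type u) (_ : Finite V) (G : SimpleGraph V) (C : Set (H ↪g G)) (col : Sym2 V → X),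
      IsRamseySystem H c₀ k G C col := by
  induction k, hk using Nat.le_induction generalizing α with
  | base =>
    exact ⟨α, ‹_›, H, _, c₀, .refl H c₀ fun c => ⟨0, fun _ => Subsingleton.elim _ _⟩⟩
  | succ k hk ih =>
    induction α using Finite.induction_empty_option with
    | of_equiv e h =>
      obtain ⟨V, _, G, C, col, hG⟩ := h (H.comap e) (c₀ ∘ Sym2.map e)
      exact ⟨V, ‹_›, G, _, _, hG.map (Iso.comap e H).symm .refl fun u v _ => by simp⟩
    | h_empty => exact ⟨PEmpty, inferInstance, H, _, c₀, .refl H c₀ fun _ => ⟨0, nofun⟩⟩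
    | @h_option α _ h =>
      obtain ⟨V₁, _, G₁, C₁, col₁, h₁⟩ := h (H.comap some) (c₀ ∘ Sym2.map some)
      obtain ⟨V₂, _, G₂, C₂, col₂, h₂⟩ := ih (Option α) H c₀
      exact ⟨_, inferInstance, _, _, _, Amalgam.isRamseySystem hk h₁ h₂⟩

theorem stmt_12_general (b s k : ℕ) (hk : 1 ≤ k)
    {m : ℕ} (H : SimpleGraph (Fin m))
    (hH : ∃ c : Sym2 (Fin m) → Fin b, ¬ HasMonoKs H s c) :
    ∃ (n : ℕ) (G : SimpleGraph (Fin n)),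
      -- (i) G is k-vertex-Ramsey for H
      (∀ c : Fin n → Fin k, ∃ f : Fin m → Fin n, Function.Injective f ∧
        (∀ u v : Fin m, H.Adj u v → G.Adj (f u) (f v)) ∧
        ∃ col : Fin k, ∀ u : Fin m, c (f u) = col) ∧
      -- (ii) G is not b-edge-Ramsey for K_s
      (∃ c : Sym2 (Fin n) → Fin b, ¬ HasMonoKs G s c) := by
  obtain ⟨c₀, hc₀⟩ := hH
  obtain ⟨V, _, G, C, col, hG⟩ := exists_isRamseySystem hk (Fin m) H c₀
  have hG' := hG.map .refl (Iso.map (Finite.equivFin V) G) fun _ _ _ => rfl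
  refine ⟨_, _, fun c => ?_, _, fun hmono => hc₀ (hG'.hasMonoKs_of_hasMonoKs hmono)⟩
  obtain ⟨φ, -, i, hi⟩ := hG'.exists_monochromatic c
  exact ⟨φ, φ.injective, fun u v => φ.map_adj_iff.2, i, hi⟩

theorem stmt_12 (b s k : ℕ) (hb : 1 ≤ b) (hs : 1 ≤ s) (hk : 1 ≤ k)
    {m : ℕ} (H : SimpleGraph (Fin m))
    (hH : ∃ c : Sym2 (Fin m) → Fin b, ¬ HasMonoKs H s c) :
    ∃ (n : ℕ) (G : SimpleGraph (Fin n)),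
      -- (i) G is k-vertex-Ramsey for H
      (∀ c : Fin n → Fin k, ∃ f : Fin m → Fin n, Function.Injective f ∧
        (∀ u v : Fin m, H.Adj u v → G.Adj (f u) (f v)) ∧
        ∃ col : Fin k, ∀ u : Fin m, c (f u) = col) ∧
      -- (ii) G is not b-edge-Ramsey for K_s
      (∃ c : Sym2 (Fin n) → Fin b, ¬ HasMonoKs G s c) :=
  stmt_12_general b s k hk H hH
end

section
/- Let s, k be positive integers and H a graph containing no copy of K_s. Then there exists a graph G such that G contains no copy of K_s and every colouring of the vertices of G with k colours yields a monochromatic copy of H. -/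
/-!
Nešetřil–Rödl partite construction. Fix `N` so large that every `k`-colouring of `Fin N` has a
monochromatic set of size `m` (pigeonhole), and start from the disjoint union of copies of `H`, one
for each injection `Fin m ↪ Fin N`, with vertex `u` of the copy at `L` placed in part `L u`. Then
make the parts monochromatic one after the other: to treat part `i` of a `K_s`-free partite graph
`P`, take a pigeonhole set `X` for part `i` and glue one copy of `P` for each embedding of part `i`
into `X`, along `X`. Part `i` is independent, so a clique of size `≥ 2` contains a vertex outside
it; such a vertex belongs to a single copy of `P`, whose image is induced, so the clique lies in
that copy and the amalgam is still `K_s`-free. Once all parts are monochromatic, the colours of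
the parts form a colouring of `Fin N`, and `m` parts of one colour carry a monochromatic copy of `H`.
-/

open Function

theorem exists_monochromatic_embedding_fin (A κ : Type*) [Finite A] [Finite κ] :
    ∃ N : ℕ, ∀ c : Fin N → κ, ∃ L : A ↪ Fin N, ∃ α : κ, ∀ a, c (L a) = α := by
  classical
  have := Fintype.ofFinite A
  have := Fintype.ofFinite κ
  refine ⟨Fintype.card κ * Fintype.card A + 1, fun c => ?_⟩
  obtain ⟨α, hα⟩ := Fintype.exists_lt_card_fiber_of_mul_lt_card (f := c)
    (n := Fintype.card A) (by simp)
  obtain ⟨L⟩ := Embedding.nonempty_of_card_le (α := A) (β := {x // c x = α})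
    (by rw [Fintype.card_subtype]; exact hα.le)
  exact ⟨L.trans (Embedding.subtype _), α, fun a => (L a).2⟩

namespace SimpleGraph

section

variable {U V W : Type*}

theorem CliqueFree.of_hom {G : SimpleGraph V} {H : SimpleGraph W} {n : ℕ} (f : G →g H)
    (hH : H.CliqueFree n) : G.CliqueFree n := by
  rw [cliqueFree_iff] at hH ⊢
  exact ⟨fun g => hH.false ⟨f.comp g.toHom, Hom.injective_of_top_hom _⟩⟩

def IsVertexRamsey (G : SimpleGraph W) (H : SimpleGraph U) (κ : Type*) : Prop :=
  ∀ c : W → κ, ∃ f : H.Copy G, ∃ α : κ, ∀ u, c (f u) = α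

theorem IsVertexRamsey.mono {X κ : Type*} {G : SimpleGraph W} {G' : SimpleGraph X}
    {H : SimpleGraph U} (h : G.IsVertexRamsey H κ) (g : G.Copy G') : G'.IsVertexRamsey H κ := by
  intro c
  obtain ⟨f, α, hα⟩ := h (c ∘ g)
  exact ⟨g.comp f, α, hα⟩

section IsPartiteRamsey

variable {ι X : Type*} {P : SimpleGraph V} {Q : SimpleGraph W} {R : SimpleGraph X}

def IsPartiteRamsey (π : P.Coloring ι) (ρ : Q.Coloring ι) (κ : Type*) (S : Set ι) : Prop :=
  ∀ c : W → κ, ∃ e : P.Copy Q, (∀ v, ρ (e v) = π v) ∧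
    ∀ j ∈ S, ∃ α : κ, ∀ v, π v = j → c (e v) = α

theorem isPartiteRamsey_empty (π : P.Coloring ι) (κ : Type*) : IsPartiteRamsey π π κ ∅ :=
  fun _ => ⟨Copy.id P, fun _ => rfl, fun _ hj => hj.elim⟩

theorem IsPartiteRamsey.trans {π : P.Coloring ι} {ρ : Q.Coloring ι} {σ : R.Coloring ι}
    {κ : Type*} {S T : Set ι} (h₁ : IsPartiteRamsey π ρ κ S) (h₂ : IsPartiteRamsey ρ σ κ T) :
    IsPartiteRamsey π σ κ (S ∪ T) := by
  intro c
  obtain ⟨e₂, hpart₂, hmono₂⟩ := h₂ c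
  obtain ⟨e₁, hpart₁, hmono₁⟩ := h₁ (c ∘ e₂)
  refine ⟨e₂.comp e₁, fun v => (hpart₂ _).trans (hpart₁ v), ?_⟩
  rintro j (hj | hj)
  · exact hmono₁ j hj
  · obtain ⟨α, hα⟩ := hmono₂ j hj
    exact ⟨α, fun v hv => hα _ ((hpart₁ v).trans hv)⟩

end IsPartiteRamsey

namespace PartiteAmalgamation

noncomputable section

variable {ι : Type*} {P : SimpleGraph V} (π : P.Coloring ι) (i : ι) (X : Type*)

/-- The vertices of part `i` are identified with points of `X` through each embedding `L`; every
other vertex `v` of `P` gets a private copy `(L, v)` for each `L`. -/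
abbrev Vert : Type _ := X ⊕ (({v // π v = i} ↪ X) × {v // π v ≠ i})

variable {X}

open Classical in
def embed (L : {v // π v = i} ↪ X) : V ↪ Vert π i X where
  toFun v := if h : π v = i then .inl (L ⟨v, h⟩) else .inr (L, ⟨v, h⟩)
  inj' a b hab := by
    dsimp only at hab
    split_ifs at hab <;> simp_all

variable (X)

def graph : SimpleGraph (Vert π i X) := ⨆ L, P.map (embed π i L)

def part : Vert π i X → ι := Sum.elim (fun _ => i) (fun p => π p.2)

variable {π i X}

theorem embed_of_eq {L : {v // π v = i} ↪ X} {v : V} (h : π v = i) :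
    embed π i L v = .inl (L ⟨v, h⟩) :=
  dif_pos h

theorem embed_of_ne {L : {v // π v = i} ↪ X} {v : V} (h : π v ≠ i) :
    embed π i L v = .inr (L, ⟨v, h⟩) :=
  dif_neg h

theorem part_embed (L : {v // π v = i} ↪ X) (v : V) : part π i X (embed π i L v) = π v := by
  by_cases hv : π v = i
  · rw [embed_of_eq hv, part, Sum.elim_inl, hv]
  · rw [embed_of_ne hv, part, Sum.elim_inr]

theorem graph_adj {x y : Vert π i X} :
    (graph π i X).Adj x y ↔ ∃ L a b, P.Adj a b ∧ embed π i L a = x ∧ embed π i L b = y := by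
  simp [graph]

variable (π i X)

def coloring : (graph π i X).Coloring ι :=
  Coloring.mk (part π i X) fun h => by
    obtain ⟨L, a, b, hab, rfl, rfl⟩ := graph_adj.1 h
    rw [part_embed, part_embed]
    exact π.valid hab

variable {π i X}

theorem eq_of_embed_eq {L₁ L₂ : {v // π v = i} ↪ X} {v₁ v₂ : V}
    (h : embed π i L₁ v₁ = embed π i L₂ v₂) (hv : π v₁ ≠ i) : L₁ = L₂ := by
  by_cases hv₂ : π v₂ = i
  · rw [embed_of_ne hv, embed_of_eq hv₂] at h
    exact Sum.inr_ne_inl h |>.elim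
  · rw [embed_of_ne hv, embed_of_ne hv₂] at h
    exact (Prod.ext_iff.1 (Sum.inr_injective h)).1

def embedding (L : {v // π v = i} ↪ X) : P ↪g graph π i X where
  toEmbedding := embed π i L
  map_rel_iff' {u v} := by
    refine ⟨fun h => ?_, fun h => graph_adj.2 ⟨L, u, v, h, rfl, rfl⟩⟩
    obtain ⟨L', a, b, hab, ha, hb⟩ := graph_adj.1 h
    have hL : L' = L := by
      rcases (π.valid hab).ne_or_ne i with h | h
      · exact eq_of_embed_eq ha h
      · exact eq_of_embed_eq hb h
    subst hL
    rwa [← (embed π i L').injective ha, ← (embed π i L').injective hb]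

theorem exists_embed_of_part_ne {z : Vert π i X} (hz : part π i X z ≠ i) :
    ∃ L v, π v ≠ i ∧ embed π i L v = z := by
  rcases z with _ | ⟨L, w⟩
  · exact absurd rfl hz
  · exact ⟨L, w, w.2, embed_of_ne w.2⟩

theorem mem_range_of_adj {L : {v // π v = i} ↪ X} {v : V} {y : Vert π i X} (hv : π v ≠ i)
    (h : (graph π i X).Adj (embed π i L v) y) : y ∈ Set.range (embed π i L) := by
  obtain ⟨L', a, b, -, ha, rfl⟩ := graph_adj.1 h
  have ha' : π a ≠ i := by rwa [← part_embed L' a, ha, part_embed]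
  rw [eq_of_embed_eq ha ha']
  exact ⟨b, rfl⟩

theorem cliqueFree {s : ℕ} (hs : 2 ≤ s) (hP : P.CliqueFree s) : (graph π i X).CliqueFree s := by
  intro t ht
  obtain ⟨x, hx, y, hy, hxy⟩ := Finset.one_lt_card.1 (ht.card_eq ▸ hs)
  obtain ⟨z, hz, hzi⟩ : ∃ z ∈ t, part π i X z ≠ i := by
    by_contra! h
    exact (coloring π i X).valid (ht.isClique hx hy hxy) ((h x hx).trans (h y hy).symm)
  obtain ⟨L, w, hw, rfl⟩ := exists_embed_of_part_ne hzi
  have hrange : ∀ y ∈ t, y ∈ Set.range (embed π i L) := by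
    intro y hy
    by_cases h : embed π i L w = y
    · exact ⟨w, h⟩
    · exact mem_range_of_adj hw (ht.isClique hz hy h)
  have hclique : (P.map (embed π i L)).IsNClique s t := by
    refine ⟨fun a ha b hb hab => ?_, ht.card_eq⟩
    obtain ⟨u, rfl⟩ := hrange a ha
    obtain ⟨v, rfl⟩ := hrange b hb
    exact map_adj_apply.2 ((embedding L).map_adj_iff.1 (ht.isClique ha hb hab))
  obtain ⟨t', ht', -⟩ := (isNClique_map_iff (by omega)).1 hclique
  exact hP t' ht'

theorem isPartiteRamsey {κ : Type*}
    (hX : ∀ c : X → κ, ∃ L : {v // π v = i} ↪ X, ∃ α : κ, ∀ a, c (L a) = α) :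
    IsPartiteRamsey π (coloring π i X) κ {i} := by
  intro c
  obtain ⟨L, α, hα⟩ := hX (c ∘ .inl)
  refine ⟨(embedding L).toCopy, part_embed L, ?_⟩
  intro j hj
  refine ⟨α, fun v hv => ?_⟩
  rw [Set.mem_singleton_iff.1 hj] at hv
  change c (embed π i L v) = α
  rw [embed_of_eq hv]
  exact hα _

end

end PartiteAmalgamation

def disjointCopies (H : SimpleGraph U) (ι : Type*) : SimpleGraph ((U ↪ ι) × U) where
  Adj a b := a.1 = b.1 ∧ H.Adj a.2 b.2
  symm := ⟨fun _ _ h => ⟨h.1.symm, h.2.symm⟩⟩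
  loopless := ⟨fun _ h => H.irrefl h.2⟩

theorem disjointCopies_adj {H : SimpleGraph U} {ι : Type*} {a b : (U ↪ ι) × U} :
    (disjointCopies H ι).Adj a b ↔ a.1 = b.1 ∧ H.Adj a.2 b.2 :=
  Iff.rfl

namespace disjointCopies

variable (H : SimpleGraph U) (ι : Type*)

def coloring : (disjointCopies H ι).Coloring ι :=
  Coloring.mk (fun a => a.1 a.2) fun {a b} h => by
    rw [disjointCopies_adj] at h
    rw [h.1]
    exact b.1.injective.ne h.2.ne

def hom : disjointCopies H ι →g H := ⟨Prod.snd, fun h => (disjointCopies_adj.1 h).2⟩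

variable {H ι}

def copy (L : U ↪ ι) : H.Copy (disjointCopies H ι) :=
  ⟨⟨fun u => (L, u), fun h => disjointCopies_adj.2 ⟨rfl, h⟩⟩, fun _ _ h => (Prod.mk.inj h).2⟩

end disjointCopies

end

section

variable {ι : Type*} {U V : Type}

theorem exists_isPartiteRamsey_singleton {s : ℕ} (hs : 2 ≤ s) (P : SimpleGraph V)
    [Finite V] (π : P.Coloring ι) (hP : P.CliqueFree s) (κ : Type*) [Finite κ] (i : ι) :
    ∃ (W : Type) (_ : Finite W) (Q : SimpleGraph W) (ρ : Q.Coloring ι),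
      Q.CliqueFree s ∧ IsPartiteRamsey π ρ κ {i} := by
  obtain ⟨N, hN⟩ := exists_monochromatic_embedding_fin {v // π v = i} κ
  exact ⟨_, inferInstance, _, PartiteAmalgamation.coloring π i (Fin N),
    PartiteAmalgamation.cliqueFree hs hP, PartiteAmalgamation.isPartiteRamsey hN⟩

theorem exists_isPartiteRamsey {s : ℕ} (hs : 2 ≤ s) (P : SimpleGraph V)
    [Finite V] (π : P.Coloring ι) (hP : P.CliqueFree s) (κ : Type*) [Finite κ] (S : Finset ι) :
    ∃ (W : Type) (_ : Finite W) (Q : SimpleGraph W) (ρ : Q.Coloring ι),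
      Q.CliqueFree s ∧ IsPartiteRamsey π ρ κ S := by
  classical
  induction S using Finset.induction_on with
  | empty => exact ⟨V, inferInstance, P, π, hP, by simpa using isPartiteRamsey_empty π κ⟩
  | insert i S _ ih =>
    obtain ⟨W, _, Q, ρ, hQ, hPQ⟩ := ih
    obtain ⟨W', _, Q', σ, hQ', hQQ'⟩ := exists_isPartiteRamsey_singleton hs Q ρ hQ κ i
    refine ⟨W', inferInstance, Q', σ, hQ', ?_⟩
    rw [Finset.coe_insert, Set.insert_eq, Set.union_comm]
    exact hPQ.trans hQQ'

theorem exists_cliqueFree_isVertexRamsey {s : ℕ} (hs : 2 ≤ s) (H : SimpleGraph U)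
    [Finite U] (hH : H.CliqueFree s) (κ : Type*) [Finite κ] :
    ∃ (W : Type) (_ : Finite W) (G : SimpleGraph W), G.CliqueFree s ∧ G.IsVertexRamsey H κ := by
  obtain ⟨N, hN⟩ := exists_monochromatic_embedding_fin U κ
  obtain ⟨W, _, G, _, hG, hR⟩ := exists_isPartiteRamsey hs (disjointCopies H (Fin N))
    (disjointCopies.coloring H _) (hH.of_hom (disjointCopies.hom H _)) κ Finset.univ
  refine ⟨W, inferInstance, G, hG, fun c => ?_⟩
  obtain ⟨e, -, hmono⟩ := hR c
  choose χ hχ using fun j => hmono j (Finset.mem_coe.2 (Finset.mem_univ j))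
  obtain ⟨L, α, hα⟩ := hN χ
  exact ⟨e.comp (disjointCopies.copy L), α, fun u => (hχ (L u) (L, u) rfl).trans (hα u)⟩

end

end SimpleGraph

open SimpleGraph

theorem stmt_13 (s k : ℕ) (hs : 1 ≤ s) (hk : 1 ≤ k)
    {m : ℕ} (H : SimpleGraph (Fin m)) (hH : H.CliqueFree s) :
    ∃ (n : ℕ) (G : SimpleGraph (Fin n)),
      G.CliqueFree s ∧
      -- G is k-vertex-Ramsey for H
      ∀ c : Fin n → Fin k, ∃ f : Fin m → Fin n, Function.Injective f ∧
        (∀ u v : Fin m, H.Adj u v → G.Adj (f u) (f v)) ∧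
        ∃ col : Fin k, ∀ u : Fin m, c (f u) = col := by
  obtain rfl | hs₂ : s = 1 ∨ 2 ≤ s := by omega
  · have : IsEmpty (Fin m) := cliqueFree_one.1 hH
    exact ⟨0, ⊥, cliqueFree_one.2 inferInstance, fun _ => ⟨isEmptyElim, fun a => isEmptyElim a,
      fun u => isEmptyElim u, ⟨0, hk⟩, fun u => isEmptyElim u⟩⟩
  · obtain ⟨W, _, G, hG, hR⟩ := exists_cliqueFree_isVertexRamsey hs₂ H hH (Fin k)
    have := Fintype.ofFinite W
    let e := G.overFinIso rfl
    refine ⟨_, G.overFin rfl, hG.comap e.symm.isContained, fun c => ?_⟩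
    obtain ⟨f, α, hα⟩ := hR.mono e.toCopy c
    exact ⟨f, f.injective, fun _ _ h => f.toHom.map_adj h, α, hα⟩
end

section
/- There exists a constant c such that for all integers p ≥ 1 and r ≥ c·p², every bijection f : [r]^(p) → [r]^(p) fixes an intersection: there exist distinct p-sets x, y ⊆ [r] with |f(x) ∩ f(y)| = |x ∩ y|. (In particular it suffices to show: if f is a bijection with f([p]) = [p] and no x satisfies |f(x) ∩ [p]| = |x ∩ [p]| = 0, then C(r,p) < 2·C(r−p,p), which fails for r ≥ c·p².) -/
/-!
Fix a `p`-set `z`. By injectivity, `f` maps the `C(r - p, p)` many `p`-sets disjoint from `z` onto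
as many `p`-sets, and `C(r - p, p)` many `p`-sets are disjoint from `f z`. Once
`C(r, p) < 2 C(r - p, p)` these two families meet, which yields `x` disjoint from `z` with `f x`
disjoint from `f z`: both intersections are empty. The binomial inequality holds for `r ≥ 4 p²`:
factor by factor, `C(r - p, p) / C(r, p) ≥ (2p / (2p + 1))^p`, and Bernoulli's inequality bounds
the latter below by `(p + 1) / (2p + 1) > 1 / 2`.
-/

open Finset

theorem two_mul_add_one_pow_lt (n : ℕ) : (2 * n + 1) ^ n < 2 * (2 * n) ^ n := by
  rcases n with _ | k
  · simp
  have bernoulli := pow_add_mul_le_add_pow (a := (2 * (k + 1) + 1 : ℤ)) (b := -1)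
    (by positivity) (by linarith) (k + 1)
  rw [add_tsub_cancel_right, pow_succ, add_neg_cancel_right] at bernoulli
  have hpos : (0 : ℤ) < (2 * (k + 1) + 1) ^ k := by positivity
  zify
  rw [pow_succ]
  push_cast at bernoulli ⊢
  nlinarith

theorem Nat.descFactorial_mul_pow_le {k m r : ℕ} (hr : k * (m + 2) ≤ r + 1) :
    r.descFactorial k * m ^ k ≤ (r - k).descFactorial k * (m + 1) ^ k := by
  simp only [Nat.descFactorial_eq_prod_range, pow_eq_prod_const, ← prod_mul_distrib]
  refine prod_le_prod' fun i hi => ?_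
  have hi : i < k := mem_range.mp hi
  have hkm : k * m + k + i ≤ r := by nlinarith
  obtain ⟨t, rfl⟩ := Nat.exists_eq_add_of_le hkm
  rw [show k * m + k + i + t - i = k * m + t + k by omega,
    show k * m + k + i + t - k - i = k * m + t by omega]
  nlinarith

theorem Nat.choose_lt_two_mul_choose_sub {p r : ℕ} (hr : p * (2 * p + 2) ≤ r + 1) :
    r.choose p < 2 * (r - p).choose p := by
  have hdesc : r.descFactorial p < 2 * (r - p).descFactorial p := by
    refine Nat.lt_of_mul_lt_mul_right (a := (2 * p) ^ p) ?_
    calc r.descFactorial p * (2 * p) ^ p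
        ≤ (r - p).descFactorial p * (2 * p + 1) ^ p := Nat.descFactorial_mul_pow_le hr
      _ < (r - p).descFactorial p * (2 * (2 * p) ^ p) := by
        gcongr
        · have : 2 * p ≤ r := by rcases p with _ | p <;> nlinarith
          exact Nat.descFactorial_pos.mpr (by omega)
        · exact two_mul_add_one_pow_lt p
      _ = 2 * (r - p).descFactorial p * (2 * p) ^ p := by ring
  rw [Nat.descFactorial_eq_factorial_mul_choose, Nat.descFactorial_eq_factorial_mul_choose,
    mul_left_comm] at hdesc
  exact Nat.lt_of_mul_lt_mul_left hdesc

theorem exists_disjoint_of_injOn_powersetCard {α : Type*} [DecidableEq α] {s z : Finset α}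
    {p : ℕ} {f : Finset α → Finset α} (hf : Set.MapsTo f (s.powersetCard p) (s.powersetCard p))
    (hinj : Set.InjOn f (s.powersetCard p)) (hz : z ∈ s.powersetCard p)
    (hs : (#s).choose p < 2 * (#s - p).choose p) :
    ∃ x ∈ s.powersetCard p, Disjoint x z ∧ Disjoint (f x) (f z) := by
  have hcard {w : Finset α} (hw : w ∈ s.powersetCard p) :
      #((s \ w).powersetCard p) = (#s - p).choose p := by
    rw [mem_powersetCard] at hw
    rw [card_powersetCard, card_sdiff_of_subset hw.1, hw.2]
  have hsub {w : Finset α} : (s \ w).powersetCard p ⊆ s.powersetCard p :=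
    powersetCard_mono sdiff_subset
  obtain ⟨y, hy⟩ := inter_nonempty_of_card_lt_card_add_card
    (s := s.powersetCard p) (t := ((s \ z).powersetCard p).image f)
    (u := (s \ f z).powersetCard p)
    (image_subset_iff.mpr fun x hx => hf (hsub hx)) hsub
    (by rw [card_image_of_injOn (hinj.mono (coe_subset.mpr hsub)), hcard hz, hcard (hf hz),
      card_powersetCard]; omega)
  obtain ⟨hyimage, hyfz⟩ := mem_inter.mp hy
  obtain ⟨x, hx, rfl⟩ := mem_image.mp hyimage
  rw [mem_powersetCard, subset_sdiff] at hx hyfz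
  exact ⟨x, mem_powersetCard.mpr ⟨hx.1.1, hx.2⟩, hx.1.2, hyfz.1.2⟩

theorem stmt_19 :
    ∃ c : ℕ, ∀ p r : ℕ, 1 ≤ p → c * p ^ 2 ≤ r →
      ∀ f : Finset ℕ → Finset ℕ,
        (∀ x : Finset ℕ, x ⊆ Finset.Icc 1 r → x.card = p →
          f x ⊆ Finset.Icc 1 r ∧ (f x).card = p) →
        (∀ x y : Finset ℕ, x ⊆ Finset.Icc 1 r → x.card = p →
          y ⊆ Finset.Icc 1 r → y.card = p → f x = f y → x = y) →
        (∀ y : Finset ℕ, y ⊆ Finset.Icc 1 r → y.card = p →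
          ∃ x : Finset ℕ, x ⊆ Finset.Icc 1 r ∧ x.card = p ∧ f x = y) →
        ∃ x y : Finset ℕ, x ⊆ Finset.Icc 1 r ∧ x.card = p ∧
          y ⊆ Finset.Icc 1 r ∧ y.card = p ∧ x ≠ y ∧
          (f x ∩ f y).card = (x ∩ y).card := by
  refine ⟨4, fun p r hp hr f hmaps hinj _ => ?_⟩
  have hcard : #(Icc 1 r) = r := by simp
  obtain ⟨z, hz⟩ := powersetCard_nonempty.mpr (hcard ▸ (by nlinarith : p ≤ r))
  have hmapsTo : Set.MapsTo f (powersetCard p (Icc 1 r)) (powersetCard p (Icc 1 r)) :=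
    fun x hx => mem_powersetCard.mpr
      (hmaps x (mem_powersetCard.mp hx).1 (mem_powersetCard.mp hx).2)
  have hinjOn : Set.InjOn f (powersetCard p (Icc 1 r)) := fun x hx y hy =>
    hinj x y (mem_powersetCard.mp hx).1 (mem_powersetCard.mp hx).2
      (mem_powersetCard.mp hy).1 (mem_powersetCard.mp hy).2
  have hbound : (#(Icc 1 r)).choose p < 2 * (#(Icc 1 r) - p).choose p := by
    rw [hcard]
    exact Nat.choose_lt_two_mul_choose_sub (by nlinarith)
  obtain ⟨x, hx, hxz, hfxz⟩ := exists_disjoint_of_injOn_powersetCard hmapsTo hinjOn hz hbound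
  rw [mem_powersetCard] at hx hz
  have hxne : x ≠ z := by
    rintro rfl
    have := card_eq_zero.mpr (disjoint_self.mp hxz)
    omega
  exact ⟨x, z, hx.1, hx.2, hz.1, hz.2, hxne, by
    rw [disjoint_iff_inter_eq_empty.mp hxz, disjoint_iff_inter_eq_empty.mp hfxz]⟩
end
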